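/- arXiv:2306.03955 — 8 statements merged into one kernel-verified Lean document; each statement's English description precedes it below -/
import Mathlib

section
/- Let A and B be positive semidefinite matrices with positive traces and let θ ∈ [0,1] with θA + (1−θ)B having positive trace. Then Φ(θA + (1−θ)B) − θΦ(A) − (1−θ)Φ(B) is positive semidefinite, i.e., the map Φ(A) = A − A²/Tr(A) is concave with respect to the Loewner order. -/
/-!
The trace is linear, so in `Φ(sA + tB) − sΦ(A) − tΦ(B)` the linear parts cancel and only the
quadratic terms survive; with `a = Tr A`, `b = Tr B`, `c = s a + t b` they combine into the
square `st/(abc) · (bA − aB)²`. For Hermitian `A`, `B` the square of the Hermitian matrix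
`bA − aB` is positive semidefinite, and the coefficient is nonnegative when `st ≥ 0` and the
traces are positive.
-/

open Matrix

namespace Matrix

variable {n : Type*} [Fintype n]

noncomputable def phi {K : Type*} [Field K] (A : Matrix n n K) : Matrix n n K :=
  A - A.trace⁻¹ • (A * A)

theorem phi_add_sub_eq_smul_sq {K : Type*} [Field K] (A B : Matrix n n K) (s t : K)
    (hA : A.trace ≠ 0) (hB : B.trace ≠ 0) (hC : (s • A + t • B).trace ≠ 0) :
    phi (s • A + t • B) - s • phi A - t • phi B =
      (s * t / ((s • A + t • B).trace * A.trace * B.trace)) •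
        ((B.trace • A - A.trace • B) * (B.trace • A - A.trace • B)) := by
  have htrace : (s • A + t • B).trace = s * A.trace + t * B.trace := by
    simp only [trace_add, trace_smul, smul_eq_mul]
  rw [htrace] at hC ⊢
  simp only [phi, htrace, Matrix.mul_add, Matrix.add_mul, Matrix.mul_sub, Matrix.sub_mul,
    Matrix.smul_mul, Matrix.mul_smul, smul_smul, smul_sub, smul_add]
  match_scalars <;> field_simp <;> ring

theorem IsHermitian.posSemidef_mul_self {R : Type*} [CommRing R] [PartialOrder R] [StarRing R]
    [StarOrderedRing R] {M : Matrix n n R} (hM : M.IsHermitian) : (M * M).PosSemidef := by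
  simpa only [hM.eq] using posSemidef_conjTranspose_mul_self M

theorem posSemidef_phi_add_sub {A B : Matrix n n ℝ} (hA : A.IsHermitian) (hB : B.IsHermitian)
    (htrA : 0 < A.trace) (htrB : 0 < B.trace) {s t : ℝ} (hst : 0 ≤ s * t)
    (htrC : 0 < (s • A + t • B).trace) :
    (phi (s • A + t • B) - s • phi A - t • phi B).PosSemidef := by
  rw [phi_add_sub_eq_smul_sq A B s t htrA.ne' htrB.ne' htrC.ne']
  have hM : (B.trace • A - A.trace • B).IsHermitian :=
    (hA.smul (IsSelfAdjoint.all _)).sub (hB.smul (IsSelfAdjoint.all _))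
  exact hM.posSemidef_mul_self.smul (by positivity)

end Matrix

/-- Concavity of `Φ(A) = A − A²/Tr(A)` with respect to the Loewner order. -/
theorem phi_concave {N : ℕ} (A B : Matrix (Fin N) (Fin N) ℝ)
    (hA : A.PosSemidef) (hB : B.PosSemidef)
    (htrA : 0 < A.trace) (htrB : 0 < B.trace)
    (θ : ℝ) (hθ0 : 0 ≤ θ) (hθ1 : θ ≤ 1)
    (htrC : 0 < (θ • A + (1 - θ) • B).trace) :
    (((θ • A + (1 - θ) • B) - (θ • A + (1 - θ) • B).trace⁻¹ •
        ((θ • A + (1 - θ) • B) * (θ • A + (1 - θ) • B)))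
      - θ • (A - A.trace⁻¹ • (A * A))
      - (1 - θ) • (B - B.trace⁻¹ • (B * B))).PosSemidef :=
  posSemidef_phi_add_sub hA.isHermitian hB.isHermitian htrA htrB
    (mul_nonneg hθ0 (sub_nonneg.mpr hθ1)) htrC
end

section
/- Let η > 0, r ≥ 0 an integer, and let x: [0,∞) → (0,∞) solve the ODE x'(t) = −x(t)²/(r·x(t) + η) with x(0) = λ₁ > 0. For a > 0 and ε > 0 with a + ε·η ≤ λ₁, the time t⋆ at which x(t⋆) = a + ε·η satisfies t⋆ ≤ r·log(λ₁/a) + 1/ε. -/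
/-!
Separating variables, `dt = -(r / x + η / x²) dx`, so `η / x - r log x - t` is conserved along
the solution. Hence the hitting time is `t⋆ = r log (λ₁ / (a + εη)) + η / (a + εη) - η / λ₁`,
and the bound follows from `a ≤ a + εη` in the logarithm and `η / (a + εη) ≤ η / (εη) = 1 / ε`.
-/

open Real Set

theorem hasDerivAt_separated_invariant {x : ℝ → ℝ} {r η t : ℝ} (hxt : x t ≠ 0)
    (hden : r * x t + η ≠ 0) (hx : HasDerivAt x (-(x t) ^ 2 / (r * x t + η)) t) :
    HasDerivAt (fun s => η / x s - r * log (x s) - s) 0 t := by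
  set d := -(x t) ^ 2 / (r * x t + η) with hd
  have hrecip : HasDerivAt (fun s => η / x s) (η * (-d / x t ^ 2)) t := by
    simpa only [div_eq_mul_inv] using (hx.fun_inv hxt).const_mul η
  have hzero : η * (-d / x t ^ 2) - r * (d / x t) - 1 = 0 := by grind
  have h := (hrecip.sub ((hx.log hxt).const_mul r)).sub (hasDerivAt_id' t)
  rwa [hzero] at h

theorem hitting_time_eq_of_hasDerivAt {x : ℝ → ℝ} {r η T : ℝ} (hT : 0 ≤ T)
    (hx : ∀ t ∈ Icc 0 T, x t ≠ 0) (hden : ∀ t ∈ Icc 0 T, r * x t + η ≠ 0)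
    (hode : ∀ t ∈ Icc 0 T, HasDerivAt x (-(x t) ^ 2 / (r * x t + η)) t) :
    T = r * (log (x 0) - log (x T)) + η / x T - η / x 0 := by
  have hinv : ∀ t ∈ Icc 0 T, HasDerivAt (fun s => η / x s - r * log (x s) - s) 0 t :=
    fun t ht => hasDerivAt_separated_invariant (hx t ht) (hden t ht) (hode t ht)
  have hconst := constant_of_has_deriv_right_zero
    (fun t ht => (hinv t ht).continuousAt.continuousWithinAt)
    (fun t ht => (hinv t (Ico_subset_Icc_self ht)).hasDerivWithinAt) T ⟨hT, le_rfl⟩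
  simp only [sub_zero] at hconst
  linarith

theorem div_add_mul_le_one_div {a ε η : ℝ} (ha : 0 ≤ a) (hε : 0 < ε) (hη : 0 < η) :
    η / (a + ε * η) ≤ 1 / ε := by
  calc η / (a + ε * η) ≤ η / (ε * η) := by gcongr; linarith
    _ = 1 / ε := by field_simp

theorem ode_hitting_time_bound_general
    (r : ℕ) (η lam1 a ε : ℝ) (hη : 0 < η)
    (ha : 0 < a) (hε : 0 < ε)
    (x : ℝ → ℝ)
    (hx0 : x 0 = lam1)
    (hxpos : ∀ t, 0 ≤ t → 0 < x t)
    (hode : ∀ t, 0 ≤ t → HasDerivAt x (-(x t) ^ 2 / (r * x t + η)) t)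
    (tstar : ℝ) (htstar : 0 ≤ tstar) (hhit : x tstar = a + ε * η) :
    tstar ≤ r * Real.log (lam1 / a) + 1 / ε := by
  have hlam1 : 0 < lam1 := hx0 ▸ hxpos 0 le_rfl
  have htime := hitting_time_eq_of_hasDerivAt htstar (fun t ht => (hxpos t ht.1).ne')
    (fun t ht => (add_pos_of_nonneg_of_pos (by positivity [hxpos t ht.1]) hη).ne')
    (fun t ht => hode t ht.1)
  rw [hx0, hhit] at htime
  have hlog : log a ≤ log (a + ε * η) := log_le_log ha (le_add_of_nonneg_right (by positivity))
  calc tstar = r * (log lam1 - log (a + ε * η)) + η / (a + ε * η) - η / lam1 := htime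
    _ ≤ r * (log lam1 - log a) + 1 / ε - 0 := by
      gcongr ?_ + ?_ - ?_
      · gcongr
      · exact div_add_mul_le_one_div ha.le hε hη
      · positivity
    _ = r * Real.log (lam1 / a) + 1 / ε := by rw [log_div hlam1.ne' ha.ne', sub_zero]

/-- Hitting-time bound for the ODE `x' = −x²/(rx + η)`: the time `t⋆` at which
the solution reaches `a + εη` satisfies `t⋆ ≤ r log(λ₁/a) + 1/ε`. -/
theorem ode_hitting_time_bound
    (r : ℕ) (η lam1 a ε : ℝ) (hη : 0 < η) (hlam1 : 0 < lam1)
    (ha : 0 < a) (hε : 0 < ε) (hle : a + ε * η ≤ lam1)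
    (x : ℝ → ℝ)
    (hx0 : x 0 = lam1)
    (hxpos : ∀ t, 0 ≤ t → 0 < x t)
    (hode : ∀ t, 0 ≤ t → HasDerivAt x (-(x t) ^ 2 / (r * x t + η)) t)
    (tstar : ℝ) (htstar : 0 ≤ tstar) (hhit : x tstar = a + ε * η) :
    tstar ≤ r * Real.log (lam1 / a) + 1 / ε :=
  ode_hitting_time_bound_general r η lam1 a ε hη ha hε x hx0 hxpos hode tstar htstar hhit
end

section
/- Let x: [0,∞) → (0,∞) be the solution of x'(t) = f(x(t)), x(0) = x₀, where f(x) = −x²/(rx + η) with r ≥ 0, η > 0. Let (a_i)_{i≥0} be a sequence satisfying a_0 ≤ x₀ and a_i ≤ a_{i−1} + f(a_{i−1}) with all a_i ∈ (0, x₀]. Then a_i ≤ x(i) for every nonnegative integer i. -/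
/-!
Let `f y = -y² / (r y + η)` and `G y = r log y - η / y` (`flowPotential`), so that `G' = -1 / f` on `(0, ∞)`.
Along the flow `G (x t) = G x₀ - t`, while `G` is increasing and concave, so that the tangent
line bound `G z - G y ≤ G' y (z - y) ≤ G' y f y = -1` shows that one step of the recursion
lowers `G` by at least one. By induction `G (a i) ≤ G (x i)`, hence `a i ≤ x i`.
-/

open Real Set

noncomputable def flowPotential (r η y : ℝ) : ℝ := r * log y - η / y

section FlowPotential

variable {r η : ℝ}

lemma flowPotential_strictMonoOn (hr : 0 ≤ r) (hη : 0 < η) :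
    StrictMonoOn (flowPotential r η) (Ioi 0) := by
  intro y hy z hz hyz
  have hlog : log y ≤ log z := log_le_log hy hyz.le
  have hinv : η / z < η / y := div_lt_div_of_pos_left hη hy hyz
  unfold flowPotential
  nlinarith

lemma hasDerivAt_flowPotential {y : ℝ} (hy : 0 < y) :
    HasDerivAt (flowPotential r η) (r / y + η / y ^ 2) y := by
  have h := ((hasDerivAt_log hy.ne').const_mul r).sub ((hasDerivAt_inv hy.ne').const_mul η)
  simp only [← div_eq_mul_inv, mul_neg, sub_neg_eq_add] at h
  exact h

lemma flowPotential_sub_le (hr : 0 ≤ r) (hη : 0 < η) {y z : ℝ} (hy : 0 < y) (hz : 0 < z) :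
    flowPotential r η z - flowPotential r η y ≤ (r / y + η / y ^ 2) * (z - y) := by
  have hlog : log z - log y ≤ (z - y) / y := by
    rw [← log_div hz.ne' hy.ne']
    calc log (z / y) ≤ z / y - 1 := log_le_sub_one_of_pos (by positivity)
      _ = (z - y) / y := by field_simp
  have hinv : η / y - η / z ≤ η * (z - y) / y ^ 2 := by
    have hgap : η / y - η / z = η * (z - y) / y ^ 2 - η * (z - y) ^ 2 / (y ^ 2 * z) := by
      field_simp; ring
    have : 0 ≤ η * (z - y) ^ 2 / (y ^ 2 * z) := by positivity
    linarith
  have hrlog := mul_le_mul_of_nonneg_left hlog hr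
  calc flowPotential r η z - flowPotential r η y = r * (log z - log y) + (η / y - η / z) := by
        unfold flowPotential; ring
    _ ≤ r * ((z - y) / y) + η * (z - y) / y ^ 2 := add_le_add hrlog hinv
    _ = (r / y + η / y ^ 2) * (z - y) := by ring

lemma flowPotential_le_sub_one_of_le_step (hr : 0 ≤ r) (hη : 0 < η) {y z : ℝ}
    (hy : 0 < y) (hz : 0 < z) (hstep : z ≤ y + -y ^ 2 / (r * y + η)) :
    flowPotential r η z ≤ flowPotential r η y - 1 := by
  have hslope : 0 ≤ r / y + η / y ^ 2 := by positivity
  have hrate : (r / y + η / y ^ 2) * (-y ^ 2 / (r * y + η)) = -1 := by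
    have : r * y + η ≠ 0 := by positivity
    field_simp
  have := mul_le_mul_of_nonneg_left (sub_le_iff_le_add'.mpr hstep) hslope
  linarith [flowPotential_sub_le hr hη hy hz]

lemma flowPotential_comp_eq_sub (hr : 0 ≤ r) (hη : 0 < η) {x : ℝ → ℝ}
    (hxpos : ∀ t, 0 ≤ t → 0 < x t)
    (hode : ∀ t, 0 ≤ t → HasDerivAt x (-(x t) ^ 2 / (r * x t + η)) t) {t : ℝ} (ht : 0 ≤ t) :
    flowPotential r η (x t) = flowPotential r η (x 0) - t := by
  have hderiv : ∀ s, 0 ≤ s → HasDerivAt (fun s ↦ flowPotential r η (x s)) (-1) s := by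
    intro s hs
    have hxs := hxpos s hs
    have hden : r * x s + η ≠ 0 := by positivity
    refine ((hasDerivAt_flowPotential hxs).comp s (hode s hs)).congr_deriv ?_
    field_simp
  have hline : ∀ s, HasDerivAt (fun s ↦ flowPotential r η (x 0) - s) (-1) s :=
    fun s ↦ (hasDerivAt_id s).const_sub _
  refine eq_of_has_deriv_right_eq (a := 0) (b := t) (f' := fun _ ↦ -1)
    (fun s hs ↦ (hderiv s hs.1).hasDerivWithinAt) (fun s _ ↦ (hline s).hasDerivWithinAt)
    (fun s hs ↦ (hderiv s hs.1).continuousAt.continuousWithinAt)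
    (fun s _ ↦ (hline s).continuousAt.continuousWithinAt) (by simp) t ⟨ht, le_rfl⟩

end FlowPotential

theorem discrete_continuous_comparison_general
    (r : ℕ) (η x₀ : ℝ) (hη : 0 < η)
    (x : ℝ → ℝ)
    (hx0 : x 0 = x₀)
    (hxpos : ∀ t, 0 ≤ t → 0 < x t)
    (hode : ∀ t, 0 ≤ t → HasDerivAt x (-(x t) ^ 2 / (r * x t + η)) t)
    (a : ℕ → ℝ)
    (ha0 : a 0 ≤ x₀)
    (harec : ∀ i, a (i + 1) ≤ a i + (-(a i) ^ 2 / (r * a i + η)))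
    (hapos : ∀ i, 0 < a i) :
    ∀ i : ℕ, a i ≤ x i := by
  have hr : (0 : ℝ) ≤ r := r.cast_nonneg
  have hmono := flowPotential_strictMonoOn hr hη
  have hflow {t : ℝ} (ht : 0 ≤ t) := flowPotential_comp_eq_sub hr hη hxpos hode ht
  intro i
  induction i with
  | zero => simpa [hx0] using ha0
  | succ n ih =>
    have hxn : 0 < x n := hxpos n n.cast_nonneg
    refine (hmono.le_iff_le (hapos (n + 1)) (hxpos _ (n + 1).cast_nonneg)).mp ?_
    calc flowPotential r η (a (n + 1)) ≤ flowPotential r η (a n) - 1 :=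
          flowPotential_le_sub_one_of_le_step hr hη (hapos n) (hapos (n + 1)) (harec n)
      _ ≤ flowPotential r η (x n) - 1 := by
          gcongr; exact (hmono.le_iff_le (hapos n) hxn).mpr ih
      _ = flowPotential r η (x (n + 1 : ℕ)) := by
          rw [hflow n.cast_nonneg, hflow (n + 1).cast_nonneg]; push_cast; ring

/-- Discrete-to-continuous comparison: a sequence performing (at most) one step
of the recursion `a_{i} ≤ a_{i−1} + f(a_{i−1})` with `f(x) = −x²/(rx+η)` is
dominated by the solution of the ODE `x' = f(x)` at integer times. -/
theorem discrete_continuous_comparison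
    (r : ℕ) (η x₀ : ℝ) (hη : 0 < η) (hx₀ : 0 < x₀)
    (x : ℝ → ℝ)
    (hx0 : x 0 = x₀)
    (hxpos : ∀ t, 0 ≤ t → 0 < x t)
    (hode : ∀ t, 0 ≤ t → HasDerivAt x (-(x t) ^ 2 / (r * x t + η)) t)
    (a : ℕ → ℝ)
    (ha0 : a 0 ≤ x₀)
    (harec : ∀ i, a (i + 1) ≤ a i + (-(a i) ^ 2 / (r * a i + η)))
    (hapos : ∀ i, 0 < a i) (haub : ∀ i, a i ≤ x₀) :
    ∀ i : ℕ, a i ≤ x i :=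
  discrete_continuous_comparison_general r η x₀ hη x hx0 hxpos hode a ha0 harec hapos
end

section
/- Let k be a psd kernel on X, S = {s₁,…,s_n} with k(S,S) invertible, and s' ∈ X. Let k_n(x,y) = k(x,y) − k(x,S)k(S,S)^{-1}k(S,y) be the residual after S. If k_n(s',s') ≠ 0, then the Nyström approximation with respect to S ∪ {s'} satisfies k_{S∪{s'}}(x,y) = k_S(x,y) + k_n(x,s')·k_n(s',s')^{-1}·k_n(s',y), i.e., the Nyström approximation updates by a rank-one term of the residual kernel. -/
/-- The Nyström approximation with nodes `T` (here with invertible `k(T,T)`). -/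
noncomputable def nystromApprox {X : Type*} (k : X → X → ℝ) {m : ℕ}
    (T : Fin m → X) (x y : X) : ℝ :=
  ∑ i, ∑ j, k x (T i) * (Matrix.of fun i j => k (T i) (T j))⁻¹ i j * k (T j) y

/-- Rank-one update of the Nyström approximation: adjoining a node `s'` with
nonzero residual diagonal adds a rank-one term of the residual kernel. -/
theorem nystrom_rank_one_update {X : Type*} (k : X → X → ℝ)
    (hsymm : ∀ x y, k x y = k y x)
    (hpsd : ∀ (m : ℕ) (x : Fin m → X) (c : Fin m → ℝ),
      0 ≤ ∑ i, ∑ j, c i * c j * k (x i) (x j))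
    (n : ℕ) (S : Fin n → X)
    (hinv : IsUnit (Matrix.of fun i j => k (S i) (S j)))
    (s' : X)
    (hres : (k s' s' - nystromApprox k S s' s') ≠ 0) :
    ∀ x y, nystromApprox k (Fin.snoc S s' : Fin (n + 1) → X) x y
      = nystromApprox k S x y
        + (k x s' - nystromApprox k S x s')
          * (k s' s' - nystromApprox k S s' s')⁻¹
          * (k s' y - nystromApprox k S s' y) := by
  intro x y
  classical
  set A : Matrix (Fin n) (Fin n) ℝ := Matrix.of fun i j => k (S i) (S j) with hA
  have hdet : IsUnit A.det := (Matrix.isUnit_iff_isUnit_det A).mp hinv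
  have hAB : A * A⁻¹ = 1 := Matrix.mul_nonsing_inv A hdet
  set B : Matrix (Fin n) (Fin n) ℝ := A⁻¹ with hBdef
  have hAsymm : A.transpose = A := by
    ext i j
    simp only [Matrix.transpose_apply, hA, Matrix.of_apply]
    exact hsymm (S j) (S i)
  have hBsymm : ∀ i j, B j i = B i j := by
    intro i j
    have h : B.transpose = B := by
      rw [hBdef, Matrix.transpose_nonsing_inv, hAsymm]
    have := congrFun (congrFun h i) j
    simpa [Matrix.transpose_apply] using this
  set b : Fin n → ℝ := fun i => k (S i) s' with hbdef
  set u : Fin n → ℝ := fun i => ∑ j, B i j * b j with hudef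
  have key : ∀ (v : Fin n → ℝ) (i : Fin n),
      ∑ l, A i l * (∑ m, B l m * v m) = v i := by
    intro v i
    calc ∑ l, A i l * (∑ m, B l m * v m)
        = ∑ m, (∑ l, A i l * B l m) * v m := by
          simp only [Finset.mul_sum, Finset.sum_mul]
          rw [Finset.sum_comm]
          exact Finset.sum_congr rfl fun m _ => Finset.sum_congr rfl fun l _ => by ring
      _ = ∑ m, (1 : Matrix (Fin n) (Fin n) ℝ) i m * v m := by
          simp only [← Matrix.mul_apply, hAB]
      _ = v i := by simp [Matrix.one_apply]
  have hAu : ∀ i, ∑ l, A i l * u l = b i := by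
    intro i
    simp only [hudef]
    exact key b i
  have hbB : ∀ j, ∑ l, b l * B l j = u j := by
    intro j
    simp only [hudef]
    exact Finset.sum_congr rfl fun l _ => by rw [hBsymm j l]; ring
  set d : ℝ := k s' s' - nystromApprox k S s' s' with hddef
  have hdne : d ≠ 0 := by rw [hddef]; exact hres
  have hdd : d * d⁻¹ = 1 := mul_inv_cancel₀ hdne
  have hnxs : ∀ z, nystromApprox k S z s' = ∑ i, k z (S i) * u i := by
    intro z
    simp only [nystromApprox, ← hA, ← hBdef, hudef, Finset.mul_sum]
    exact Finset.sum_congr rfl fun i _ => Finset.sum_congr rfl fun j _ => by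
      first | (simp only [hbdef]; ring) | simp only [hbdef]
  have hnsy : ∀ z, nystromApprox k S s' z = ∑ j, u j * k (S j) z := by
    intro z
    simp only [nystromApprox, ← hA, ← hBdef]
    rw [Finset.sum_comm]
    refine Finset.sum_congr rfl fun j _ => ?_
    rw [← hbB j, Finset.sum_mul]
    refine Finset.sum_congr rfl fun i _ => ?_
    simp only [hbdef]
    first
    | (rw [hsymm s' (S i)]; ring)
    | rw [hsymm s' (S i)]
    | ring
    | rfl
  have hbu : ∑ i, b i * u i = k s' s' - d := by
    have h1 : nystromApprox k S s' s' = ∑ i, b i * u i := by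
      rw [hnxs s']
      exact Finset.sum_congr rfl fun i _ => by
        simp only [hbdef]; rw [hsymm s' (S i)]
    rw [hddef, h1]; ring
  set T : Fin (n + 1) → X := Fin.snoc S s' with hT
  set M : Matrix (Fin (n + 1)) (Fin (n + 1)) ℝ := Matrix.of (fun i j => k (T i) (T j)) with hM
  set N : Matrix (Fin (n + 1)) (Fin (n + 1)) ℝ := fun i j =>
    Fin.lastCases (motive := fun _ => ℝ)
      (Fin.lastCases (motive := fun _ => ℝ) d⁻¹ (fun j' => -(d⁻¹ * u j')) j)
      (fun i' => Fin.lastCases (motive := fun _ => ℝ)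
        (-(u i' * d⁻¹)) (fun j' => B i' j' + u i' * d⁻¹ * u j') j) i
    with hN
  have hN1 : ∀ i' j' : Fin n, N i'.castSucc j'.castSucc = B i' j' + u i' * d⁻¹ * u j' := by
    intro i' j'; simp [hN]
  have hN2 : ∀ i' : Fin n, N i'.castSucc (Fin.last n) = -(u i' * d⁻¹) := by
    intro i'; simp [hN]
  have hN3 : ∀ j' : Fin n, N (Fin.last n) j'.castSucc = -(d⁻¹ * u j') := by
    intro j'; simp [hN]
  have hN4 : N (Fin.last n) (Fin.last n) = d⁻¹ := by simp [hN]
  have hM1 : ∀ i' j' : Fin n, M i'.castSucc j'.castSucc = A i' j' := by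
    intro i' j'; simp [hM, hT, hA]
  have hM2 : ∀ i' : Fin n, M i'.castSucc (Fin.last n) = b i' := by
    intro i'; simp [hM, hT, hbdef]
  have hM3 : ∀ j' : Fin n, M (Fin.last n) j'.castSucc = b j' := by
    intro j'; simp [hM, hT, hbdef]; exact hsymm s' (S j')
  have hM4 : M (Fin.last n) (Fin.last n) = k s' s' := by simp [hM, hT]
  have hMN : M * N = 1 := by
    ext i j
    rw [Matrix.mul_apply, Fin.sum_univ_castSucc]
    rcases Fin.eq_castSucc_or_eq_last i with ⟨i', rfl⟩ | rfl
    · rcases Fin.eq_castSucc_or_eq_last j with ⟨j', rfl⟩ | rfl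
      · simp only [hM1, hM2, hN1, hN3]
        have e1 : ∑ l, A i' l * (B l j' + u l * d⁻¹ * u j')
            = (∑ l, A i' l * B l j') + (∑ l, A i' l * u l) * (d⁻¹ * u j') := by
          rw [Finset.sum_mul, ← Finset.sum_add_distrib]
          exact Finset.sum_congr rfl fun l _ => by ring
        rw [e1, hAu i', ← Matrix.mul_apply, hAB]
        simp [Matrix.one_apply, Fin.castSucc_inj]
      · simp only [hM1, hM2, hN2, hN4]
        have e1 : ∑ l, A i' l * -(u l * d⁻¹) = -((∑ l, A i' l * u l) * d⁻¹) := by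
          rw [Finset.sum_mul, ← Finset.sum_neg_distrib]
          exact Finset.sum_congr rfl fun l _ => by ring
        rw [e1, hAu i', Matrix.one_apply_ne (Fin.castSucc_lt_last i').ne]
        ring
    · rcases Fin.eq_castSucc_or_eq_last j with ⟨j', rfl⟩ | rfl
      · simp only [hM3, hM4, hN1, hN3]
        have e1 : ∑ l, b l * (B l j' + u l * d⁻¹ * u j')
            = (∑ l, b l * B l j') + (∑ l, b l * u l) * (d⁻¹ * u j') := by
          rw [Finset.sum_mul, ← Finset.sum_add_distrib]
          exact Finset.sum_congr rfl fun l _ => by ring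
        rw [e1, hbB j', hbu, Matrix.one_apply_ne (Fin.castSucc_lt_last j').ne']
        linear_combination (-(u j')) * hdd
      · simp only [hM3, hM4, hN2, hN4]
        have e1 : ∑ l, b l * -(u l * d⁻¹) = -((∑ l, b l * u l) * d⁻¹) := by
          rw [Finset.sum_mul, ← Finset.sum_neg_distrib]
          exact Finset.sum_congr rfl fun l _ => by ring
        rw [e1, hbu, Matrix.one_apply_eq]
        linear_combination hdd
  have hMinv : M⁻¹ = N := Matrix.inv_eq_right_inv hMN
  have hLHS : nystromApprox k T x y = ∑ i, ∑ j, k x (T i) * N i j * k (T j) y := by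
    simp only [nystromApprox, ← hM, hMinv]
  have hnxy : nystromApprox k S x y = ∑ i, ∑ j, k x (S i) * B i j * k (S j) y := by
    simp only [nystromApprox, ← hA, ← hBdef]
  rw [hLHS, hnxy, hnxs x, hnsy y]
  have inner1 : ∀ i' : Fin n, ∑ j, k x (T i'.castSucc) * N i'.castSucc j * k (T j) y
      = (∑ j', k x (S i') * B i' j' * k (S j') y)
        + (k x (S i') * u i') * d⁻¹ * (∑ j', u j' * k (S j') y)
        - (k x (S i') * u i') * (d⁻¹ * k s' y) := by
    intro i'
    rw [Fin.sum_univ_castSucc]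
    simp only [hT, Fin.snoc_castSucc, Fin.snoc_last, hN1, hN2]
    have e : ∀ j' : Fin n, k x (S i') * (B i' j' + u i' * d⁻¹ * u j') * k (S j') y
        = k x (S i') * B i' j' * k (S j') y
          + (k x (S i') * u i' * d⁻¹) * (u j' * k (S j') y) := fun j' => by ring
    rw [Finset.sum_congr rfl fun j' _ => e j', Finset.sum_add_distrib, ← Finset.mul_sum]
    ring
  have inner2 : ∑ j, k x (T (Fin.last n)) * N (Fin.last n) j * k (T j) y
      = -((k x s' * d⁻¹) * (∑ j', u j' * k (S j') y)) + k x s' * d⁻¹ * k s' s'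
        - k x s' * d⁻¹ * k s' s' + k x s' * d⁻¹ * k s' y := by
    rw [Fin.sum_univ_castSucc]
    simp only [hT, Fin.snoc_castSucc, Fin.snoc_last, hN3, hN4]
    have e : ∀ j' : Fin n, k x s' * -(d⁻¹ * u j') * k (S j') y
        = -((k x s' * d⁻¹) * (u j' * k (S j') y)) := fun j' => by ring
    rw [Finset.sum_congr rfl fun j' _ => e j', Finset.sum_neg_distrib, ← Finset.mul_sum]
    ring
  rw [Fin.sum_univ_castSucc, Finset.sum_congr rfl fun i' _ => inner1 i', inner2,
    Finset.sum_sub_distrib, Finset.sum_add_distrib]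
  simp only [← Finset.sum_mul]
  ring
end

section
/- Let Φ(A) = A − A²/Tr(A) on symmetric psd matrices with positive trace, and suppose X is a random psd matrix with 0 ⪯ X ⪯ B almost surely, where B is a fixed psd matrix with Tr B > 0. Then E[Φ(X)] ⪯ Φ(E[X]) ⪯ Φ(B) (when the expectations exist and E[X], X have positive trace a.s.). -/
/-!
`Φ(A) = A − A²/Tr A` is homogeneous, and for psd `A`, `B` with traces `a, b > 0`
`Φ(A + B) − Φ(A) − Φ(B) = (b A − a B)² / (a b (a + b)) ⪰ 0`,
so `Φ` is superadditive on the psd cone; with homogeneity this is the Jensen inequality.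
For psd `D` the eigenvalues lie in `[0, Tr D]`, so `D² ⪯ (Tr D) D`, i.e. `Φ(D) ⪰ 0`;
superadditivity then gives monotonicity: `Φ(B) ⪰ Φ(A) + Φ(B − A) ⪰ Φ(A)`.
-/

/-- The expected one-step RPCholesky map `Φ(A) = A − A²/Tr A`. -/
noncomputable def rpcPhi {N : ℕ} (A : Matrix (Fin N) (Fin N) ℝ) :
    Matrix (Fin N) (Fin N) ℝ :=
  A - A.trace⁻¹ • (A * A)

open Matrix
open scoped MatrixOrder ComplexOrder

namespace Matrix.PosSemidef

variable {𝕜 n : Type*} [RCLike 𝕜] [Fintype n] {D : Matrix n n 𝕜}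

theorem eq_zero_or_trace_pos (hD : D.PosSemidef) : D = 0 ∨ 0 < D.trace :=
  hD.trace_nonneg.eq_or_lt.imp_left fun h => hD.trace_eq_zero_iff.1 h.symm

theorem eigenvalues_le_re_trace [DecidableEq n] (hD : D.PosSemidef) (i : n) :
    hD.1.eigenvalues i ≤ RCLike.re D.trace := by
  rw [hD.1.trace_eq_sum_eigenvalues, map_sum]
  simp only [RCLike.ofReal_re]
  exact Finset.single_le_sum (fun j _ => hD.eigenvalues_nonneg j) (Finset.mem_univ i)

theorem mul_self_le_re_trace_smul (hD : D.PosSemidef) : D * D ≤ RCLike.re D.trace • D := by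
  classical
  rw [← cfc_const_mul_id (RCLike.re D.trace) D, ← sq, ← cfc_pow_id (R := ℝ) D 2]
  refine cfc_mono fun x hx => ?_
  obtain ⟨i, rfl⟩ := hD.1.spectrum_real_eq_range_eigenvalues ▸ hx
  rw [sq]
  exact mul_le_mul_of_nonneg_right (hD.eigenvalues_le_re_trace i) (hD.eigenvalues_nonneg i)

end Matrix.PosSemidef

section rpcPhi

variable {N : ℕ}

@[simp]
theorem rpcPhi_zero : rpcPhi (0 : Matrix (Fin N) (Fin N) ℝ) = 0 := by
  simp [rpcPhi]

theorem rpcPhi_smul (c : ℝ) (A : Matrix (Fin N) (Fin N) ℝ) :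
    rpcPhi (c • A) = c • rpcPhi A := by
  rcases eq_or_ne c 0 with rfl | hc
  · simp
  simp only [rpcPhi, trace_smul, smul_eq_mul, smul_mul_smul, smul_sub, smul_smul]
  match_scalars <;> field_simp

theorem rpcPhi_nonneg {D : Matrix (Fin N) (Fin N) ℝ} (hD : 0 ≤ D) : 0 ≤ rpcPhi D := by
  obtain rfl | htr := hD.posSemidef.eq_zero_or_trace_pos
  · rw [rpcPhi_zero]
  rw [rpcPhi, sub_nonneg]
  calc D.trace⁻¹ • (D * D) ≤ D.trace⁻¹ • D.trace • D :=
        smul_le_smul_of_nonneg_left hD.posSemidef.mul_self_le_re_trace_smul (inv_nonneg.2 htr.le)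
    _ = D := inv_smul_smul₀ htr.ne' D

theorem rpcPhi_add_sub_rpcPhi_add_rpcPhi {A B : Matrix (Fin N) (Fin N) ℝ}
    (hA : A.trace ≠ 0) (hB : B.trace ≠ 0) (hAB : A.trace + B.trace ≠ 0) :
    rpcPhi (A + B) - (rpcPhi A + rpcPhi B) =
      (A.trace * B.trace * (A.trace + B.trace))⁻¹ •
        ((B.trace • A - A.trace • B) * (B.trace • A - A.trace • B)) := by
  simp only [rpcPhi, trace_add, add_mul, mul_add, sub_mul, mul_sub, smul_mul_assoc, mul_smul_comm]
  match_scalars <;> field_simp <;> ring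

theorem rpcPhi_add_rpcPhi_le {A B : Matrix (Fin N) (Fin N) ℝ} (hA : 0 ≤ A) (hB : 0 ≤ B) :
    rpcPhi A + rpcPhi B ≤ rpcPhi (A + B) := by
  obtain rfl | ha := hA.posSemidef.eq_zero_or_trace_pos
  · simp
  obtain rfl | hb := hB.posSemidef.eq_zero_or_trace_pos
  · simp
  rw [← sub_nonneg, rpcPhi_add_sub_rpcPhi_add_rpcPhi ha.ne' hb.ne' (by positivity)]
  have hM : IsSelfAdjoint (B.trace • A - A.trace • B) :=
    ((IsSelfAdjoint.all _).smul (IsSelfAdjoint.of_nonneg hA)).sub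
      ((IsSelfAdjoint.all _).smul (IsSelfAdjoint.of_nonneg hB))
  exact smul_nonneg (by positivity) hM.mul_self_nonneg

theorem sum_rpcPhi_le_rpcPhi_sum {ι : Type*} (s : Finset ι)
    {Y : ι → Matrix (Fin N) (Fin N) ℝ} (hY : ∀ i ∈ s, 0 ≤ Y i) :
    ∑ i ∈ s, rpcPhi (Y i) ≤ rpcPhi (∑ i ∈ s, Y i) := by
  classical
  induction s using Finset.induction_on with
  | empty => simp
  | insert a s ha ih =>
    rw [Finset.sum_insert ha, Finset.sum_insert ha]
    have hYs : ∀ i ∈ s, 0 ≤ Y i := fun i hi => hY i (Finset.mem_insert_of_mem hi)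
    calc rpcPhi (Y a) + ∑ i ∈ s, rpcPhi (Y i) ≤ rpcPhi (Y a) + rpcPhi (∑ i ∈ s, Y i) :=
          add_le_add_right (ih hYs) _
      _ ≤ rpcPhi (Y a + ∑ i ∈ s, Y i) :=
          rpcPhi_add_rpcPhi_le (hY a (Finset.mem_insert_self a s)) (Finset.sum_nonneg hYs)

theorem rpcPhi_le_rpcPhi {A B : Matrix (Fin N) (Fin N) ℝ} (hA : 0 ≤ A) (hAB : A ≤ B) :
    rpcPhi A ≤ rpcPhi B :=
  calc rpcPhi A ≤ rpcPhi A + rpcPhi (B - A) :=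
        le_add_of_nonneg_right (rpcPhi_nonneg (sub_nonneg.2 hAB))
    _ ≤ rpcPhi (A + (B - A)) := rpcPhi_add_rpcPhi_le hA (sub_nonneg.2 hAB)
    _ = rpcPhi B := by rw [add_sub_cancel]

end rpcPhi

theorem phi_jensen_monotone_general {N : ℕ} {Ω : Type*} [Fintype Ω]
    (p : Ω → ℝ) (hp : ∀ ω, 0 ≤ p ω) (hp1 : ∑ ω, p ω = 1)
    (X : Ω → Matrix (Fin N) (Fin N) ℝ)
    (B : Matrix (Fin N) (Fin N) ℝ)
    (hX : ∀ ω, (X ω).PosSemidef) (hXB : ∀ ω, (B - X ω).PosSemidef) :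
    (rpcPhi (∑ ω, p ω • X ω) - ∑ ω, p ω • rpcPhi (X ω)).PosSemidef ∧
      (rpcPhi B - rpcPhi (∑ ω, p ω • X ω)).PosSemidef := by
  have hpX : ∀ ω ∈ Finset.univ, 0 ≤ p ω • X ω := fun ω _ =>
    smul_nonneg (hp ω) (hX ω).nonneg
  have hmean : ∑ ω, p ω • X ω ≤ B :=
    calc ∑ ω, p ω • X ω ≤ ∑ ω, p ω • B :=
          Finset.sum_le_sum fun ω _ => smul_le_smul_of_nonneg_left (hXB ω) (hp ω)
      _ = B := by rw [← Finset.sum_smul, hp1, one_smul]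
  refine ⟨?_, rpcPhi_le_rpcPhi (Finset.sum_nonneg hpX) hmean⟩
  simp_rw [← rpcPhi_smul]
  exact sum_rpcPhi_le_rpcPhi_sum Finset.univ hpX

/-- Operator Jensen and monotonicity for `Φ`: for a random psd matrix `X` with
`0 ⪯ X ⪯ B` a.s. (finite probability space), `E[Φ(X)] ⪯ Φ(E[X]) ⪯ Φ(B)`. -/
theorem phi_jensen_monotone {N : ℕ} {Ω : Type*} [Fintype Ω]
    (p : Ω → ℝ) (hp : ∀ ω, 0 ≤ p ω) (hp1 : ∑ ω, p ω = 1)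
    (X : Ω → Matrix (Fin N) (Fin N) ℝ)
    (B : Matrix (Fin N) (Fin N) ℝ) (hB : B.PosSemidef)
    (hX : ∀ ω, (X ω).PosSemidef) (hXB : ∀ ω, (B - X ω).PosSemidef)
    (htrB : 0 < B.trace) (htrX : ∀ ω, 0 < (X ω).trace)
    (htrE : 0 < (∑ ω, p ω • X ω).trace) :
    (rpcPhi (∑ ω, p ω • X ω) - ∑ ω, p ω • rpcPhi (X ω)).PosSemidef ∧
      (rpcPhi B - rpcPhi (∑ ω, p ω • X ω)).PosSemidef :=
  phi_jensen_monotone_general p hp hp1 X B hX hXB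
end

section
/- Let T_n denote the residual integral operator after n steps of \textsc{RPCholesky} sampling applied to a psd kernel, where in each step E[T_i | s₁,…,s_{i−1}] = Φ(T_{i−1}) with Φ(A) = A − A²/Tr A. Then E[T_n] ⪯ Φⁿ(T) in the Loewner order, where Φⁿ is the n-fold composition of Φ. (Finite-dimensional version: a random sequence of psd matrices T₀ = T, with E[T_i | T_{i−1}] = Φ(T_{i−1}) and 0 ⪯ T_i ⪯ T_{i−1} a.s., satisfies E[T_n] ⪯ Φⁿ(T).) -/
/-!
Everything rests on the linear map `DΦ(E) F = F - (F E + E F) / tr E + (tr F / (tr E)²) E²`,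
the derivative of `Φ` at `E`. Since `Φ` is `1`-homogeneous, `DΦ(E) E = Φ(E)`, and for psd `F`

* `DΦ(E) F - Φ(F) = (tr F)⁻¹ (F - (tr F / tr E) E)² ⪰ 0` (tangent inequality, i.e. concavity);
* `DΦ(E) D = (1 - E / tr E) D (1 - E / tr E) + (tr E)⁻² E (tr D • 1 - D) E ⪰ 0` for psd `D`.

Because `DΦ(E)` is linear it commutes with expectations, so the tangent inequality at `E = 𝔼 F`
integrates to Jensen's inequality `𝔼 Φ(F) ⪯ Φ(𝔼 F)`; the two facts together give monotonicity
`Φ(B) ⪯ DΦ(C) B = Φ(C) - DΦ(C) (C - B) ⪯ Φ(C)` for `0 ⪯ B ⪯ C`. The tower property turns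
`𝔼 T_{n+1}` into `𝔼 Φ(T_n) ⪯ Φ(𝔼 T_n) ⪯ Φ(Φⁿ A)`.
-/

open MeasureTheory

open Matrix
open scoped MatrixOrder

theorem Matrix.PosSemidef.le_trace_smul_one {n : Type*} [Fintype n] [DecidableEq n]
    {D : Matrix n n ℝ} (hD : D.PosSemidef) : D ≤ D.trace • 1 := by
  rw [← Algebra.algebraMap_eq_smul_one]
  refine le_algebraMap_of_spectrum_le fun x hx => ?_
  rw [hD.1.spectrum_real_eq_range_eigenvalues] at hx
  obtain ⟨i, rfl⟩ := hx
  rw [hD.1.trace_eq_sum_eigenvalues]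
  exact Finset.single_le_sum (fun j _ => hD.eigenvalues_nonneg j) (Finset.mem_univ i)

section Integral

variable {Ω : Type*} {m0 : MeasurableSpace Ω} {μ : Measure Ω} {m n : Type*}
  {F G : Ω → Matrix m n ℝ}

/-- Entrywise, as in the statement; this avoids choosing one of the non-instance matrix norms
needed for the Bochner integral of matrices. -/
noncomputable def Matrix.integral (μ : Measure Ω) (F : Ω → Matrix m n ℝ) : Matrix m n ℝ :=
  of fun i j => ∫ ω, F ω i j ∂μ

theorem Matrix.linearMap_apply_eq_sum [Fintype m] [Fintype n] [DecidableEq m] [DecidableEq n]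
    (ℓ : Matrix m n ℝ →ₗ[ℝ] ℝ) (A : Matrix m n ℝ) :
    ℓ A = ∑ i, ∑ j, A i j * ℓ (single i j 1) := by
  conv_lhs => rw [matrix_eq_sum_single A]
  simp only [map_sum]
  refine Finset.sum_congr rfl fun i _ => Finset.sum_congr rfl fun j _ => ?_
  rw [← smul_eq_mul, ← map_smul, smul_single, smul_eq_mul, mul_one]

theorem Matrix.integral_sub (hF : ∀ i j, Integrable (fun ω => F ω i j) μ)
    (hG : ∀ i j, Integrable (fun ω => G ω i j) μ) :
    Matrix.integral μ (fun ω => F ω - G ω) = Matrix.integral μ F - Matrix.integral μ G := by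
  ext i j
  exact MeasureTheory.integral_sub (hF i j) (hG i j)

variable [Fintype m] [Fintype n]

theorem Matrix.integrable_linearMap_comp (ℓ : Matrix m n ℝ →ₗ[ℝ] ℝ)
    (hF : ∀ i j, Integrable (fun ω => F ω i j) μ) : Integrable (fun ω => ℓ (F ω)) μ := by
  classical
  simp only [linearMap_apply_eq_sum ℓ (F _)]
  exact integrable_finsetSum _ fun i _ => integrable_finsetSum _ fun j _ => (hF i j).mul_const _

theorem Matrix.integral_linearMap_comp (ℓ : Matrix m n ℝ →ₗ[ℝ] ℝ)
    (hF : ∀ i j, Integrable (fun ω => F ω i j) μ) :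
    ∫ ω, ℓ (F ω) ∂μ = ℓ (Matrix.integral μ F) := by
  classical
  have hterm : ∀ i j, Integrable (fun ω => F ω i j * ℓ (single i j 1)) μ :=
    fun i j => (hF i j).mul_const _
  simp only [linearMap_apply_eq_sum ℓ (F _), linearMap_apply_eq_sum ℓ (Matrix.integral μ F)]
  rw [integral_finsetSum _ fun i _ => integrable_finsetSum _ fun j _ => hterm i j]
  refine Finset.sum_congr rfl fun i _ => ?_
  rw [integral_finsetSum _ fun j _ => hterm i j]
  exact Finset.sum_congr rfl fun j _ => integral_mul_const _ _

theorem Matrix.integral_linearMap {p q : Type*} (L : Matrix m n ℝ →ₗ[ℝ] Matrix p q ℝ)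
    (hF : ∀ i j, Integrable (fun ω => F ω i j) μ) :
    Matrix.integral μ (fun ω => L (F ω)) = L (Matrix.integral μ F) := by
  ext i j
  exact integral_linearMap_comp ((entryLinearMap ℝ ℝ i j).comp L) hF

end Integral

section Order

variable {Ω : Type*} {m0 : MeasurableSpace Ω} {μ : Measure Ω} {n : Type*} [Fintype n]
  {F G : Ω → Matrix n n ℝ}

theorem Matrix.integral_nonneg (hF : 0 ≤ᵐ[μ] F) (hFi : ∀ i j, Integrable (fun ω => F ω i j) μ) :
    0 ≤ Matrix.integral μ F := by
  have hF' : ∀ᵐ ω ∂μ, (F ω).PosSemidef := hF.mono fun ω hω => nonneg_iff_posSemidef.1 hω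
  rw [nonneg_iff_posSemidef, posSemidef_iff_dotProduct_mulVec]
  refine ⟨?_, fun v => ?_⟩
  · ext i j
    exact integral_congr_ae (hF'.mono fun ω hω => congr_fun₂ hω.1 i j)
  · let ℓ : Matrix n n ℝ →ₗ[ℝ] ℝ :=
      { toFun A := star v ⬝ᵥ A *ᵥ v
        map_add' A B := by simp only [add_mulVec, dotProduct_add]
        map_smul' c A := by simp only [smul_mulVec, dotProduct_smul, RingHom.id_apply] }
    calc 0 ≤ ∫ ω, ℓ (F ω) ∂μ :=
          MeasureTheory.integral_nonneg_of_ae (hF'.mono fun ω hω => hω.dotProduct_mulVec_nonneg v)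
      _ = ℓ (Matrix.integral μ F) := integral_linearMap_comp ℓ hFi

theorem Matrix.integral_mono (hFG : F ≤ᵐ[μ] G) (hF : ∀ i j, Integrable (fun ω => F ω i j) μ)
    (hG : ∀ i j, Integrable (fun ω => G ω i j) μ) :
    Matrix.integral μ F ≤ Matrix.integral μ G := by
  rw [← sub_nonneg, ← Matrix.integral_sub hG hF]
  exact integral_nonneg (hFG.mono fun ω hω => sub_nonneg.2 hω) fun i j => (hG i j).sub (hF i j)

end Order

section RPCholesky

variable {N : ℕ}

/-- For `tr E = 0` this is the identity (as `0⁻¹ = 0`); the identities below hold regardless. -/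
noncomputable def rpcPhiDeriv (E : Matrix (Fin N) (Fin N) ℝ) :
    Matrix (Fin N) (Fin N) ℝ →ₗ[ℝ] Matrix (Fin N) (Fin N) ℝ where
  toFun F := F - E.trace⁻¹ • (F * E + E * F) + (E.trace⁻¹ ^ 2 * F.trace) • (E * E)
  map_add' F G := by
    simp only [add_mul, mul_add, trace_add, add_smul, smul_add]
    abel
  map_smul' c F := by
    simp only [smul_mul_assoc, mul_smul_comm, trace_smul, smul_eq_mul, RingHom.id_apply,
      smul_add, smul_sub, smul_smul]
    module

theorem rpcPhiDeriv_self (E : Matrix (Fin N) (Fin N) ℝ) : rpcPhiDeriv E E = rpcPhi E := by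
  by_cases hE : E.trace = 0
  · simp [rpcPhiDeriv, rpcPhi, hE]
  · simp only [rpcPhiDeriv, rpcPhi, LinearMap.coe_mk, AddHom.coe_mk]
    rw [show E.trace⁻¹ ^ 2 * E.trace = E.trace⁻¹ by field_simp]
    module

theorem rpcPhiDeriv_eq {E : Matrix (Fin N) (Fin N) ℝ} (hE : E.IsHermitian)
    (D : Matrix (Fin N) (Fin N) ℝ) :
    rpcPhiDeriv E D = (1 - E.trace⁻¹ • E) * D * (1 - E.trace⁻¹ • E)ᴴ +
      E.trace⁻¹ ^ 2 • (E * (D.trace • 1 - D) * Eᴴ) := by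
  simp only [rpcPhiDeriv, LinearMap.coe_mk, AddHom.coe_mk, conjTranspose_sub, conjTranspose_one,
    conjTranspose_smul, hE.eq, star_trivial]
  simp only [sub_mul, mul_sub, smul_mul_assoc, mul_smul_comm, one_mul, mul_one, smul_sub,
    smul_smul, mul_assoc]
  module

theorem rpcPhiDeriv_nonneg {E D : Matrix (Fin N) (Fin N) ℝ} (hE : E.IsHermitian) (hD : 0 ≤ D) :
    0 ≤ rpcPhiDeriv E D := by
  rw [nonneg_iff_posSemidef] at hD ⊢
  rw [rpcPhiDeriv_eq hE]
  exact (hD.mul_mul_conjTranspose_same _).add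
    ((hD.le_trace_smul_one.mul_mul_conjTranspose_same E).smul (sq_nonneg _))

theorem rpcPhi_le_rpcPhiDeriv {E F : Matrix (Fin N) (Fin N) ℝ} (hE : E.IsHermitian)
    (hF : 0 ≤ F) : rpcPhi F ≤ rpcPhiDeriv E F := by
  rw [nonneg_iff_posSemidef] at hF
  by_cases hZ : F.trace = 0
  · simp [hF.trace_eq_zero_iff.1 hZ, rpcPhi]
  have hgap : rpcPhiDeriv E F - rpcPhi F =
      F.trace⁻¹ • ((F - (F.trace / E.trace) • E) * (F - (F.trace / E.trace) • E)ᴴ) := by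
    simp only [rpcPhiDeriv, rpcPhi, LinearMap.coe_mk, AddHom.coe_mk, conjTranspose_sub,
      conjTranspose_smul, hE.eq, hF.1.eq, star_trivial]
    simp only [sub_mul, mul_sub, smul_mul_assoc, mul_smul_comm, smul_sub, smul_smul]
    rw [show F.trace⁻¹ * (F.trace / E.trace) = E.trace⁻¹ by field_simp,
      show F.trace⁻¹ * (F.trace / E.trace * (F.trace / E.trace)) = E.trace⁻¹ ^ 2 * F.trace by
        field_simp]
    module
  rw [le_iff, hgap]
  exact (posSemidef_self_mul_conjTranspose _).smul (inv_nonneg.2 hF.trace_nonneg)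

theorem rpcPhi_mono {B C : Matrix (Fin N) (Fin N) ℝ} (hB : 0 ≤ B) (hBC : B ≤ C) :
    rpcPhi B ≤ rpcPhi C := by
  have hC : C.IsHermitian := (nonneg_iff_posSemidef.1 (hB.trans hBC)).1
  calc rpcPhi B ≤ rpcPhiDeriv C B := rpcPhi_le_rpcPhiDeriv hC hB
    _ = rpcPhi C - rpcPhiDeriv C (C - B) := by rw [map_sub, rpcPhiDeriv_self]; abel
    _ ≤ rpcPhi C := sub_le_self _ (rpcPhiDeriv_nonneg hC (sub_nonneg.2 hBC))

theorem integral_rpcPhi_le {Ω : Type*} {m0 : MeasurableSpace Ω} {μ : Measure Ω}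
    {F : Ω → Matrix (Fin N) (Fin N) ℝ} (hF : 0 ≤ᵐ[μ] F)
    (hFi : ∀ i j, Integrable (fun ω => F ω i j) μ)
    (hΦi : ∀ i j, Integrable (fun ω => rpcPhi (F ω) i j) μ) :
    Matrix.integral μ (fun ω => rpcPhi (F ω)) ≤ rpcPhi (Matrix.integral μ F) := by
  set E := Matrix.integral μ F
  have hE : E.IsHermitian := (nonneg_iff_posSemidef.1 (Matrix.integral_nonneg hF hFi)).1
  calc Matrix.integral μ (fun ω => rpcPhi (F ω))
      ≤ Matrix.integral μ (fun ω => rpcPhiDeriv E (F ω)) :=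
        Matrix.integral_mono (hF.mono fun ω hω => rpcPhi_le_rpcPhiDeriv hE hω) hΦi
          fun i j => integrable_linearMap_comp ((entryLinearMap ℝ ℝ i j).comp (rpcPhiDeriv E)) hFi
    _ = rpcPhiDeriv E E := Matrix.integral_linearMap _ hFi
    _ = rpcPhi E := rpcPhiDeriv_self E

end RPCholesky

theorem rpcholesky_residual_expectation_bound_general {N : ℕ}
    {Ω : Type*} {m0 : MeasurableSpace Ω} (μ : Measure Ω) [IsProbabilityMeasure μ]
    (m : ℕ → MeasurableSpace Ω) (hm : ∀ i, m i ≤ m0)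
    (A : Matrix (Fin N) (Fin N) ℝ)
    (T : ℕ → Ω → Matrix (Fin N) (Fin N) ℝ)
    (hT0 : ∀ ω, T 0 ω = A)
    (hTpsd : ∀ i, ∀ᵐ ω ∂μ, (T i ω).PosSemidef ∧ ((T i ω) - (T (i + 1) ω)).PosSemidef)
    (hint : ∀ i x y, Integrable (fun ω => T i ω x y) μ)
    (hcond : ∀ i x y,
      μ[(fun ω => T (i + 1) ω x y) | m i] =ᵐ[μ] fun ω => rpcPhi (T i ω) x y)
    (n : ℕ) :
    ((rpcPhi^[n] A) - Matrix.of fun x y => ∫ ω, T n ω x y ∂μ).PosSemidef := by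
  have hT : ∀ i, 0 ≤ᵐ[μ] T i := fun i =>
    (hTpsd i).mono fun ω hω => nonneg_iff_posSemidef.2 hω.1
  have hΦi : ∀ i x y, Integrable (fun ω => rpcPhi (T i ω) x y) μ := fun i x y =>
    integrable_condExp.congr (hcond i x y)
  have htower : ∀ i, Matrix.integral μ (T (i + 1)) = Matrix.integral μ fun ω => rpcPhi (T i ω) :=
    fun i => ext fun x y => (integral_condExp (hm i)).symm.trans (integral_congr_ae (hcond i x y))
  change Matrix.integral μ (T n) ≤ rpcPhi^[n] A
  induction n with
  | zero => exact le_of_eq (ext fun x y => by simp [Matrix.integral, hT0])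
  | succ n ih =>
    rw [Function.iterate_succ_apply', htower]
    exact (integral_rpcPhi_le (hT n) (hint n) (hΦi n)).trans
      (rpcPhi_mono (Matrix.integral_nonneg (hT n) (hint n)) ih)

/-- RPCholesky residual bound: a random sequence of psd matrices `T_i` with
`T₀ = A`, `0 ⪯ T_{i+1} ⪯ T_i` a.s., and `E[T_{i+1} | ℱ_i] = Φ(T_i)` satisfies
`E[T_n] ⪯ Φⁿ(A)` in the Loewner order. -/
theorem rpcholesky_residual_expectation_bound {N : ℕ}
    {Ω : Type*} {m0 : MeasurableSpace Ω} (μ : Measure Ω) [IsProbabilityMeasure μ]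
    (m : ℕ → MeasurableSpace Ω) (hm : ∀ i, m i ≤ m0)
    (A : Matrix (Fin N) (Fin N) ℝ) (hA : A.PosSemidef)
    (T : ℕ → Ω → Matrix (Fin N) (Fin N) ℝ)
    (hT0 : ∀ ω, T 0 ω = A)
    (hTpsd : ∀ i, ∀ᵐ ω ∂μ, (T i ω).PosSemidef ∧ ((T i ω) - (T (i + 1) ω)).PosSemidef)
    (hTtr : ∀ i, ∀ᵐ ω ∂μ, 0 < (T i ω).trace)
    (hint : ∀ i x y, Integrable (fun ω => T i ω x y) μ)
    (hcond : ∀ i x y,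
      μ[(fun ω => T (i + 1) ω x y) | m i] =ᵐ[μ] fun ω => rpcPhi (T i ω) x y)
    (n : ℕ) :
    ((rpcPhi^[n] A) - Matrix.of fun x y => ∫ ω, T n ω x y ∂μ).PosSemidef :=
  rpcholesky_residual_expectation_bound_general μ m hm A T hT0 hTpsd hint hcond n
end

section
/- Let λ₁ ≥ λ₂ ≥ ⋯ ≥ 0 be a nonincreasing summable sequence with λ₁ > 0, let r ≥ 0 be an integer and a, ε > 0 with a + ε∑_{ℓ>r}λ_ℓ ≤ λ₁. Define the scalar recurrence x_{i} = x_{i−1} − x_{i−1}²/(r·x_{i−1} + ∑_{ℓ>r}λ_ℓ), x₀ = λ₁. If n ≥ r·log(λ₁/a) + 1/ε, then x_n ≤ a + ε·∑_{ℓ>r}λ_ℓ. -/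
/-!
The potential `Φ(y) = r log y - η / y` is the separated-variables solution of the ODE
`y' = -y² / (r y + η)`, and along the recurrence it drops by at least one per step: by
`log t ≥ 1 - 1/t` and `1/y' - 1/y ≥ (y - y')/y²`, the drop is at least `(y - y')(r y + η)/y² = 1`.
While `x i > a + εη`, the total drop `Φ(x 0) - Φ(x n)` is at most `r log (x 0 / a) + η / (a + εη)`,
which is smaller than `r log (x 0 / a) + 1/ε`.
-/

open Real

namespace ScalarRecurrence

variable {r η : ℝ}

lemma le_mul_add_of_le (hη : 0 ≤ η) {c y : ℝ} (hc : c ≤ r * c + η)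
    (hy : 0 ≤ y) (hyc : y ≤ c) : y ≤ r * y + η := by
  rcases le_total r 1 with hr1 | hr1
  · nlinarith [mul_nonneg (sub_nonneg.2 hr1) (sub_nonneg.2 hyc)]
  · nlinarith

lemma step_mem_Icc {y : ℝ} (hy : 0 ≤ y) (hyD : y ≤ r * y + η) :
    y - y ^ 2 / (r * y + η) ∈ Set.Icc 0 y := by
  rcases hy.eq_or_lt with rfl | hy
  · simp
  have hD : 0 < r * y + η := hy.trans_le hyD
  have hsq : y ^ 2 / (r * y + η) ≤ y := by
    rw [div_le_iff₀ hD]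
    nlinarith
  exact ⟨sub_nonneg.2 hsq, sub_le_self _ (by positivity)⟩

lemma potential_step (hr : 0 ≤ r) (hη : 0 ≤ η) {y y' : ℝ} (hy' : 0 < y') (hle : y' ≤ y)
    (hstep : (y - y') * (r * y + η) = y ^ 2) :
    1 ≤ r * (log y - log y') + (η / y' - η / y) := by
  have hy : 0 < y := hy'.trans_le hle
  have hlog : (y - y') / y ≤ log y - log y' := by
    rw [← log_div hy.ne' hy'.ne']
    calc (y - y') / y = 1 - (y / y')⁻¹ := by field_simp
      _ ≤ log (y / y') := one_sub_inv_le_log_of_pos (by positivity)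
  have hinv : (y - y') / y ^ 2 ≤ 1 / y' - 1 / y := by
    rw [show 1 / y' - 1 / y = (y - y') / (y' * y) by field_simp]
    exact div_le_div_of_nonneg_left (sub_nonneg.2 hle) (by positivity) (by nlinarith)
  calc (1 : ℝ) = r * ((y - y') / y) + η * ((y - y') / y ^ 2) := by
        field_simp
        linear_combination -hstep
    _ ≤ r * (log y - log y') + η * (1 / y' - 1 / y) := by gcongr
    _ = r * (log y - log y') + (η / y' - η / y) := by ring

section Recurrence

variable {x : ℕ → ℝ} (hη : 0 ≤ η) (h0 : 0 ≤ x 0) (hD0 : x 0 ≤ r * x 0 + η)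
  (hx : ∀ i, x (i + 1) = x i - x i ^ 2 / (r * x i + η))
include hη h0 hD0 hx

lemma mem_Icc_of_recurrence (i : ℕ) : x i ∈ Set.Icc 0 (x 0) := by
  induction i with
  | zero => exact ⟨h0, le_rfl⟩
  | succ i ih =>
    have hstep := hx i ▸ step_mem_Icc ih.1 (le_mul_add_of_le hη hD0 ih.1 ih.2)
    exact ⟨hstep.1, hstep.2.trans ih.2⟩

lemma antitone_of_recurrence : Antitone x := by
  refine antitone_nat_of_succ_le fun i => ?_
  have hi := mem_Icc_of_recurrence hη h0 hD0 hx i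
  exact (hx i ▸ step_mem_Icc hi.1 (le_mul_add_of_le hη hD0 hi.1 hi.2)).2

lemma le_potential_drop (hr : 0 ≤ r) {n : ℕ} (hpos : 0 < x n) :
    (n : ℝ) ≤ r * (log (x 0) - log (x n)) + (η / x n - η / x 0) := by
  have hanti := antitone_of_recurrence hη h0 hD0 hx
  induction n with
  | zero => simp
  | succ n ih =>
    have hle : x (n + 1) ≤ x n := hanti n.le_succ
    have hxn : 0 < x n := hpos.trans_le hle
    have hD : 0 < r * x n + η := hxn.trans_le <|
      le_mul_add_of_le hη hD0 hxn.le (mem_Icc_of_recurrence hη h0 hD0 hx n).2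
    have hstep : (x n - x (n + 1)) * (r * x n + η) = x n ^ 2 := by
      rw [hx n, sub_sub_cancel, div_mul_cancel₀ _ hD.ne']
    have := potential_step hr hη hpos hle hstep
    push_cast
    linarith [ih hxn]

theorem le_of_hitting_time (hr : 0 ≤ r) {a ε : ℝ} (ha : 0 < a) (hε : 0 < ε) {n : ℕ}
    (hn : r * log (x 0 / a) + 1 / ε ≤ n) : x n ≤ a + ε * η := by
  by_contra! hxn
  have hb : 0 < a + ε * η := by positivity
  have hpos : 0 < x n := hb.trans hxn
  have hx0 : 0 < x 0 := hpos.trans_le (antitone_of_recurrence hη h0 hD0 hx n.zero_le)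
  have hlog : log (x 0) - log (x n) ≤ log (x 0 / a) := by
    rw [log_div hx0.ne' ha.ne']
    linarith [log_le_log ha (by nlinarith : a ≤ x n)]
  have hηx : η / x n ≤ η / (a + ε * η) := by gcongr
  have hηb : η / (a + ε * η) < 1 / ε := by
    rw [div_lt_div_iff₀ hb hε]
    nlinarith
  have := le_potential_drop hη h0 hD0 hx hr hpos
  nlinarith [mul_le_mul_of_nonneg_left hlog hr, div_nonneg hη hx0.le]

end Recurrence

end ScalarRecurrence

open ScalarRecurrence in
theorem scalar_recurrence_bound_general
    (lam : ℕ → ℝ) (hnonneg : ∀ j, 0 ≤ lam j)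
    (hsum : Summable lam)
    (r : ℕ) (a ε : ℝ) (ha : 0 < a) (hε : 0 < ε)
    (x : ℕ → ℝ) (hx0 : x 0 = lam 0)
    (hxrec : ∀ i, x (i + 1) = x i - (x i) ^ 2 / (r * x i + ∑' ℓ, lam (ℓ + r)))
    (n : ℕ) (hn : (n : ℝ) ≥ r * Real.log (lam 0 / a) + 1 / ε) :
    x n ≤ a + ε * ∑' ℓ, lam (ℓ + r) := by
  have hη : 0 ≤ ∑' ℓ, lam (ℓ + r) := tsum_nonneg fun ℓ => hnonneg _
  have hD0 : x 0 ≤ r * x 0 + ∑' ℓ, lam (ℓ + r) := by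
    rcases Nat.eq_zero_or_pos r with rfl | hr
    · simpa [hx0] using hsum.le_tsum 0 fun j _ => hnonneg j
    · have : (1 : ℝ) ≤ r := by exact_mod_cast hr
      nlinarith [hnonneg 0]
  exact le_of_hitting_time hη (hx0 ▸ hnonneg 0) hD0 hxrec r.cast_nonneg ha hε (hx0 ▸ hn)

/-- Core scalar lemma of the RPCholesky error bound: the recurrence
`x_{i} = x_{i−1} − x_{i−1}²/(r x_{i−1} + η)` with `η = ∑_{ℓ>r} λ_ℓ` and
`x₀ = λ₁` drops below `a + εη` after `n ≥ r log(λ₁/a) + 1/ε` steps. -/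
theorem scalar_recurrence_bound
    (lam : ℕ → ℝ) (hanti : Antitone lam) (hnonneg : ∀ j, 0 ≤ lam j)
    (hsum : Summable lam) (hlam1 : 0 < lam 0)
    (r : ℕ) (a ε : ℝ) (ha : 0 < a) (hε : 0 < ε)
    (hle : a + ε * ∑' ℓ, lam (ℓ + r) ≤ lam 0)
    (x : ℕ → ℝ) (hx0 : x 0 = lam 0)
    (hxrec : ∀ i, x (i + 1) = x i - (x i) ^ 2 / (r * x i + ∑' ℓ, lam (ℓ + r)))
    (n : ℕ) (hn : (n : ℝ) ≥ r * Real.log (lam 0 / a) + 1 / ε) :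
    x n ≤ a + ε * ∑' ℓ, lam (ℓ + r) :=
  scalar_recurrence_bound_general lam hnonneg hsum r a ε ha hε x hx0 hxrec n hn
end

section
/- Main error bound for \textsc{RPCholesky} kernel quadrature (operator/matrix form): Let T be a psd trace-class operator with eigenvalues λ₁ ≥ λ₂ ≥ ⋯, and let (T_i) be a sequence of random psd operators with T₀ = T and E[T_i | T_{i−1}] = T_{i−1} − T_{i−1}²/Tr(T_{i−1}). For any integer r ≥ 0 and reals a, ε > 0, if n ≥ r·log(λ₁/a) + 1/ε then λ_max(E[T_n]) ≤ a + ε·∑_{i=r+1}^∞ λ_i. -/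
open MeasureTheory Matrix

/-!
The quadratic form `v ⬝ Φ(X) v = v ⬝ X v − |Xv|² / Tr X` is the minimum over `z` of
`v ⬝ X v − 2 z ⬝ X v + Tr X · |z|²`, which is linear in `X`. Hence `Φ` is concave (so
`E[T_{i+1}] ⪯ Φ(E[T_i])`) and monotone on psd matrices, and by induction `E[T_n] ⪯ Φⁿ(T₀)`.
`Φ` commutes with unitary conjugation, so `Φⁿ(T₀)` has eigenvalues `φⁿ(λ)` where
`φ(λ)_j = λ_j − λ_j² / ∑ λ`. The map `φ` keeps `λ` sorted and nonnegative, so its largest entry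
`x` has trace at most `r x + t` with `t = ∑_{j > r} λ_j` and thus decreases by at least
`x² / (r x + t)`. Along that decrease the potential `r log x − t / x` drops by at least `1` per
step (a discrete form of the ODE `x' = −x² / (r x + t)`), which gives the hitting time
`r log(λ₁ / a) + 1 / ε` of the level `a + ε t`.
-/

open Finset
open scoped MatrixOrder

open Real in
theorem add_one_le_of_sq_le_decrement {r t x y : ℝ} (hr : 0 ≤ r) (ht : 0 ≤ t) (hy : 0 < y)
    (hyx : y ≤ x) (hdec : x ^ 2 ≤ (x - y) * (r * x + t)) :
    r * log y - t / y + 1 ≤ r * log x - t / x := by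
  have hx : 0 < x := hy.trans_le hyx
  have hlog : (x - y) / x ≤ log x - log y := by
    have := one_sub_inv_le_log_of_pos (div_pos hx hy)
    rw [log_div hx.ne' hy.ne', inv_div] at this
    rwa [sub_div, div_self hx.ne']
  have hinv : t * (x - y) / x ^ 2 ≤ t / y - t / x := by
    rw [div_sub_div _ _ hy.ne' hx.ne', div_le_div_iff₀ (by positivity) (by positivity)]
    have : 0 ≤ t * (x - y) := mul_nonneg ht (sub_nonneg.2 hyx)
    nlinarith [mul_le_mul_of_nonneg_left hyx (mul_nonneg this hx.le)]
  have hone : 1 ≤ r * ((x - y) / x) + t * (x - y) / x ^ 2 := by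
    rw [show r * ((x - y) / x) + t * (x - y) / x ^ 2 = (x - y) * (r * x + t) / x ^ 2 by
      field_simp, le_div_iff₀ (by positivity)]
    linarith
  nlinarith [mul_le_mul_of_nonneg_left hlog hr]

open Real in
theorem hitting_time_of_sq_le_decrement {z : ℕ → ℝ} (hz : Antitone z) {r t a ε : ℝ}
    (hr : 0 ≤ r) (ht : 0 ≤ t) (ha : 0 < a) (hε : 0 < ε)
    (hstep : ∀ i, z i ^ 2 ≤ (z i - z (i + 1)) * (r * z i + t)) {n : ℕ}
    (hn : r * log (z 0 / a) + 1 / ε ≤ n) : z n ≤ a + ε * t := by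
  by_contra! hzn
  have hb : 0 < a + ε * t := by positivity
  have hpos : ∀ i ≤ n, a + ε * t < z i := fun i hi => hzn.trans_le (hz hi)
  have htel : ∀ i ≤ n, r * log (z i) - t / z i + i ≤ r * log (z 0) - t / z 0 := by
    intro i hi
    induction i with
    | zero => simp
    | succ i ih =>
      have := add_one_le_of_sq_le_decrement hr ht (hb.trans (hpos _ hi)) (hz i.le_succ) (hstep i)
      push_cast
      linarith [ih (by omega)]
  have hz0 : 0 < z 0 := hb.trans (hpos 0 n.zero_le)
  have hlog : log (z 0) - log (z n) ≤ log (z 0 / a) := by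
    rw [log_div hz0.ne' ha.ne']
    linarith [log_le_log ha (by nlinarith [hpos n le_rfl] : a ≤ z n)]
  have htail : t / z n < 1 / ε := by
    calc t / z n ≤ t / (a + ε * t) := div_le_div_of_nonneg_left ht hb (hpos n le_rfl).le
      _ < 1 / ε := by rw [div_lt_div_iff₀ hb hε]; linarith
  have := htel n le_rfl
  nlinarith [mul_le_mul_of_nonneg_left hlog hr, div_nonneg ht hz0.le]

noncomputable def rpcPhiVec {ι : Type*} [Fintype ι] (v : ι → ℝ) : ι → ℝ :=
  fun j => v j - (∑ l, v l)⁻¹ * v j ^ 2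

section RpcPhiVec

variable {ι : Type*} [Fintype ι] {v : ι → ℝ}

theorem rpcPhiVec_comp_equiv (e : ι ≃ ι) (v : ι → ℝ) :
    rpcPhiVec (v ∘ e) = rpcPhiVec v ∘ e := by
  ext j
  simp only [rpcPhiVec, Function.comp_apply, e.sum_comp v]

theorem rpcPhiVec_iterate_comp_equiv (e : ι ≃ ι) (n : ℕ) (v : ι → ℝ) :
    rpcPhiVec^[n] (v ∘ e) = rpcPhiVec^[n] v ∘ e :=
  have h : Function.Semiconj (· ∘ e) rpcPhiVec rpcPhiVec := fun v =>
    (rpcPhiVec_comp_equiv e v).symm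
  (h.iterate_right n v).symm

theorem sub_rpcPhiVec_mul_sum (hv : 0 ≤ v) (j : ι) :
    (v j - rpcPhiVec v j) * ∑ l, v l = v j ^ 2 := by
  rcases eq_or_ne (∑ l, v l) 0 with hS | hS
  · have : v j = 0 := (sum_eq_zero_iff_of_nonneg fun l _ => hv l).1 hS j (mem_univ j)
    simp [hS, this]
  · simp only [rpcPhiVec]
    field_simp
    ring

theorem rpcPhiVec_le (hv : 0 ≤ v) : rpcPhiVec v ≤ v := fun j => by
  have : 0 ≤ (∑ l, v l)⁻¹ := inv_nonneg.2 (sum_nonneg fun l _ => hv l)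
  simp only [rpcPhiVec]
  nlinarith [sq_nonneg (v j)]

theorem rpcPhiVec_nonneg (hv : 0 ≤ v) : 0 ≤ rpcPhiVec v := fun j => by
  have : (∑ l, v l)⁻¹ * v j ≤ 1 :=
    inv_mul_le_one_of_le₀ (single_le_sum (fun l _ => hv l) (mem_univ j))
      (sum_nonneg fun l _ => hv l)
  simp only [rpcPhiVec, Pi.zero_apply]
  nlinarith [mul_nonneg (hv j) (sub_nonneg.2 this)]

theorem rpcPhiVec_antitone [Preorder ι] (hv : 0 ≤ v) (hanti : Antitone v) :
    Antitone (rpcPhiVec v) := by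
  intro j k hjk
  rcases eq_or_ne j k with rfl | hne
  · rfl
  have : (∑ l, v l)⁻¹ * (v k + v j) ≤ 1 :=
    inv_mul_le_one_of_le₀ (add_le_sum (fun l _ => hv l) (mem_univ k) (mem_univ j) hne.symm)
      (sum_nonneg fun l _ => hv l)
  simp only [rpcPhiVec]
  nlinarith [mul_nonneg (sub_nonneg.2 (hanti hjk)) (sub_nonneg.2 this)]

theorem rpcPhiVec_iterate_nonneg_and_antitone [Preorder ι] (hv : 0 ≤ v) (hanti : Antitone v)
    (n : ℕ) :
    0 ≤ rpcPhiVec^[n] v ∧ Antitone (rpcPhiVec^[n] v) :=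
  Set.MapsTo.iterate (s := {v | 0 ≤ v ∧ Antitone v})
    (fun _ hw => ⟨rpcPhiVec_nonneg hw.1, rpcPhiVec_antitone hw.1 hw.2⟩) n ⟨hv, hanti⟩

theorem antitone_rpcPhiVec_iterate [Preorder ι] (hv : 0 ≤ v) (hanti : Antitone v) :
    Antitone fun i => rpcPhiVec^[i] v :=
  antitone_nat_of_succ_le fun i => by
    rw [Function.iterate_succ_apply']
    exact rpcPhiVec_le (rpcPhiVec_iterate_nonneg_and_antitone hv hanti i).1

end RpcPhiVec

theorem sum_le_mul_head_add_tail {N : ℕ} (hN : 0 < N) {w e : Fin N → ℝ} (hw : 0 ≤ w)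
    (hanti : Antitone w) (hwe : w ≤ e) (r : ℕ) :
    ∑ l, w l ≤ r * w ⟨0, hN⟩ + ∑ l ∈ univ.filter (fun l : Fin N => r ≤ (l : ℕ)), e l := by
  rw [← sum_filter_not_add_sum_filter univ (fun l : Fin N => r ≤ (l : ℕ))]
  gcongr with l
  · have hcard : #(univ.filter (fun l : Fin N => ¬ r ≤ (l : ℕ))) ≤ r := by
      simpa using card_le_card_of_injOn (t := range r) Fin.val
        (fun l hl => by simp at hl ⊢; omega) Fin.val_injective.injOn
    calc ∑ l ∈ univ.filter (fun l : Fin N => ¬ r ≤ (l : ℕ)), w l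
        ≤ ∑ _l ∈ univ.filter (fun l : Fin N => ¬ r ≤ (l : ℕ)), w ⟨0, hN⟩ :=
          sum_le_sum fun l _ => hanti (Nat.zero_le l)
      _ ≤ r * w ⟨0, hN⟩ := by
          rw [sum_const, nsmul_eq_mul]
          gcongr
          exact hw _
  · exact hwe l

theorem rpcPhiVec_iterate_le {N : ℕ} (hN : 0 < N) {e : Fin N → ℝ} (he : 0 ≤ e)
    (hanti : Antitone e) {r : ℕ} {a ε : ℝ} (ha : 0 < a) (hε : 0 < ε) {n : ℕ}
    (hn : (n : ℝ) ≥ r * Real.log (e ⟨0, hN⟩ / a) + 1 / ε) (j : Fin N) :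
    rpcPhiVec^[n] e j ≤ a + ε * ∑ l ∈ univ.filter (fun l : Fin N => r ≤ (l : ℕ)), e l := by
  set z : ℕ → ℝ := fun i => rpcPhiVec^[i] e ⟨0, hN⟩
  have hz : Antitone z := fun i k hik => antitone_rpcPhiVec_iterate he hanti hik ⟨0, hN⟩
  have hstep (i : ℕ) : z i ^ 2 ≤ (z i - z (i + 1)) *
      (r * z i + ∑ l ∈ univ.filter (fun l : Fin N => r ≤ (l : ℕ)), e l) := by
    obtain ⟨hnonneg, hanti_i⟩ := rpcPhiVec_iterate_nonneg_and_antitone he hanti i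
    calc z i ^ 2 = (z i - z (i + 1)) * ∑ l, rpcPhiVec^[i] e l := by
          simp only [z, Function.iterate_succ_apply', sub_rpcPhiVec_mul_sum hnonneg]
      _ ≤ _ := mul_le_mul_of_nonneg_left
          (sum_le_mul_head_add_tail hN hnonneg hanti_i
            (antitone_rpcPhiVec_iterate he hanti (Nat.zero_le i)) r)
          (sub_nonneg.2 (hz i.le_succ))
  calc rpcPhiVec^[n] e j ≤ z n :=
        (rpcPhiVec_iterate_nonneg_and_antitone he hanti n).2 (Nat.zero_le j)
    _ ≤ _ := hitting_time_of_sq_le_decrement hz (Nat.cast_nonneg r)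
        (sum_nonneg fun l _ => he l) ha hε hstep hn

namespace Matrix

variable {n : Type*} [Fintype n]

theorem le_of_forall_dotProduct_mulVec_le {X Y : Matrix n n ℝ} (hX : X.IsHermitian)
    (hY : Y.IsHermitian) (h : ∀ v, v ⬝ᵥ X *ᵥ v ≤ v ⬝ᵥ Y *ᵥ v) : X ≤ Y :=
  PosSemidef.of_dotProduct_mulVec_nonneg (hY.sub hX) fun v => by
    simpa [sub_mulVec, dotProduct_sub] using h v

theorem dotProduct_mulVec_le_of_le {X Y : Matrix n n ℝ} (h : X ≤ Y) (v : n → ℝ) :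
    v ⬝ᵥ X *ᵥ v ≤ v ⬝ᵥ Y *ᵥ v := by
  simpa [sub_mulVec, dotProduct_sub] using PosSemidef.dotProduct_mulVec_nonneg h v

theorem IsHermitian.dotProduct_mulVec_comm {X : Matrix n n ℝ} (hX : X.IsHermitian)
    (v w : n → ℝ) : v ⬝ᵥ X *ᵥ w = w ⬝ᵥ X *ᵥ v := by
  rw [dotProduct_mulVec, ← mulVec_transpose, ← conjTranspose_eq_transpose_of_trivial, hX,
    dotProduct_comm]

variable [DecidableEq n]

theorem conjStarAlgAut_diagonal_le_smul_one (u : unitary (Matrix n n ℝ)) {d : n → ℝ} {c : ℝ}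
    (hd : ∀ j, d j ≤ c) :
    Unitary.conjStarAlgAut ℝ _ u (diagonal d) ≤ c • (1 : Matrix n n ℝ) := by
  have hdiag : diagonal d ≤ c • (1 : Matrix n n ℝ) := by
    rw [le_iff, smul_one_eq_diagonal, diagonal_sub, posSemidef_diagonal_iff]
    exact fun j => sub_nonneg.2 (hd j)
  simpa using star_right_conjugate_le_conjugate hdiag (u : Matrix n n ℝ)

theorem PosSemidef.le_trace_smul_one_s18 {H : Matrix n n ℝ} (hH : H.PosSemidef) :
    H ≤ H.trace • (1 : Matrix n n ℝ) := by
  have hspec := hH.1.spectral_theorem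
  simp only [RCLike.ofReal_real_eq_id, CompTriple.comp_eq] at hspec
  rw [hH.1.trace_eq_sum_eigenvalues]
  conv_lhs => rw [hspec]
  exact conjStarAlgAut_diagonal_le_smul_one _ fun j =>
    single_le_sum (fun l _ => hH.eigenvalues_nonneg l) (mem_univ j)

end Matrix

section Majorant

variable {n : Type*} [Fintype n]

noncomputable def dotProductMulVecₗ (v w : n → ℝ) : Matrix n n ℝ →ₗ[ℝ] ℝ where
  toFun X := v ⬝ᵥ X *ᵥ w
  map_add' X Y := by simp only [add_mulVec, dotProduct_add]
  map_smul' c X := by simp only [smul_mulVec, dotProduct_smul, smul_eq_mul, RingHom.id_apply]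

@[simp]
theorem dotProductMulVecₗ_apply (v w : n → ℝ) (X : Matrix n n ℝ) :
    dotProductMulVecₗ v w X = v ⬝ᵥ X *ᵥ w :=
  rfl

/-- The linear majorant of `X ↦ v ⬝ᵥ rpcPhi X *ᵥ v` touching it at `z = (Tr X)⁻¹ • X *ᵥ v`. -/
noncomputable def rpcMajorant (v z : n → ℝ) : Matrix n n ℝ →ₗ[ℝ] ℝ where
  toFun X := v ⬝ᵥ X *ᵥ v - 2 * (z ⬝ᵥ X *ᵥ v) + X.trace * (z ⬝ᵥ z)
  map_add' X Y := by simp only [add_mulVec, dotProduct_add, trace_add]; ring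
  map_smul' c X := by
    simp only [smul_mulVec, dotProduct_smul, trace_smul, smul_eq_mul, RingHom.id_apply]; ring

@[simp]
theorem rpcMajorant_apply (v z : n → ℝ) (X : Matrix n n ℝ) :
    rpcMajorant v z X = v ⬝ᵥ X *ᵥ v - 2 * (z ⬝ᵥ X *ᵥ v) + X.trace * (z ⬝ᵥ z) :=
  rfl

theorem rpcMajorant_nonneg [DecidableEq n] {H : Matrix n n ℝ} (hH : H.PosSemidef)
    (v z : n → ℝ) : 0 ≤ rpcMajorant v z H := by
  have hvz := hH.dotProduct_mulVec_nonneg (v - z)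
  have hz := dotProduct_mulVec_le_of_le hH.le_trace_smul_one_s18 z
  simp only [star_trivial, mulVec_sub, dotProduct_sub, sub_dotProduct,
    hH.1.dotProduct_mulVec_comm v z] at hvz
  simp only [smul_mulVec, one_mulVec, dotProduct_smul, smul_eq_mul] at hz
  rw [rpcMajorant_apply]
  linarith

end Majorant

section RpcPhi

variable {N : ℕ}

theorem Matrix.IsHermitian.rpcPhi {X : Matrix (Fin N) (Fin N) ℝ} (hX : X.IsHermitian) :
    (rpcPhi X).IsHermitian :=
  hX.sub <| by simpa [sq] using (hX.pow 2).smul (k := X.trace⁻¹) (IsSelfAdjoint.all _)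

theorem dotProduct_rpcPhi_mulVec {X : Matrix (Fin N) (Fin N) ℝ} (hX : X.IsHermitian)
    (v : Fin N → ℝ) :
    v ⬝ᵥ rpcPhi X *ᵥ v = v ⬝ᵥ X *ᵥ v - X.trace⁻¹ * ((X *ᵥ v) ⬝ᵥ (X *ᵥ v)) := by
  rw [rpcPhi, sub_mulVec, dotProduct_sub, smul_mulVec, dotProduct_smul, ← mulVec_mulVec,
    hX.dotProduct_mulVec_comm v (X *ᵥ v), smul_eq_mul]

theorem dotProduct_rpcPhi_mulVec_le {X : Matrix (Fin N) (Fin N) ℝ} (hX : X.PosSemidef)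
    (v z : Fin N → ℝ) : v ⬝ᵥ rpcPhi X *ᵥ v ≤ rpcMajorant v z X := by
  rcases hX.trace_nonneg.eq_or_lt with h0 | hpos
  · obtain rfl := hX.trace_eq_zero_iff.1 h0.symm
    simp [rpcPhi, rpcMajorant]
  have hsq : 0 ≤ X.trace⁻¹ * ((X *ᵥ v - X.trace • z) ⬝ᵥ (X *ᵥ v - X.trace • z)) :=
    mul_nonneg (inv_nonneg.2 hpos.le)
      (by simpa using dotProduct_star_self_nonneg (X *ᵥ v - X.trace • z))
  have hgap : rpcMajorant v z X - v ⬝ᵥ rpcPhi X *ᵥ v =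
      X.trace⁻¹ * ((X *ᵥ v - X.trace • z) ⬝ᵥ (X *ᵥ v - X.trace • z)) := by
    simp only [rpcMajorant_apply, dotProduct_rpcPhi_mulVec hX.1, dotProduct_sub, sub_dotProduct,
      dotProduct_smul, smul_dotProduct, smul_eq_mul, dotProduct_comm z (X *ᵥ v)]
    field_simp
    ring
  linarith

theorem dotProduct_rpcPhi_mulVec_eq {X : Matrix (Fin N) (Fin N) ℝ} (hX : X.IsHermitian)
    (v : Fin N → ℝ) : v ⬝ᵥ rpcPhi X *ᵥ v = rpcMajorant v (X.trace⁻¹ • X *ᵥ v) X := by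
  rw [dotProduct_rpcPhi_mulVec hX, rpcMajorant_apply]
  simp only [smul_dotProduct, dotProduct_smul, smul_eq_mul]
  rcases eq_or_ne X.trace 0 with h | h
  · simp [h]
  · field_simp; ring

theorem rpcPhi_mono_s18 {X Y : Matrix (Fin N) (Fin N) ℝ} (hX : 0 ≤ X) (hXY : X ≤ Y) :
    rpcPhi X ≤ rpcPhi Y := by
  have hY : Y.PosSemidef := (hX.trans hXY).posSemidef
  refine le_of_forall_dotProduct_mulVec_le hX.posSemidef.1.rpcPhi hY.1.rpcPhi fun v => ?_
  set z := Y.trace⁻¹ • Y *ᵥ v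
  calc v ⬝ᵥ rpcPhi X *ᵥ v ≤ rpcMajorant v z X := dotProduct_rpcPhi_mulVec_le hX.posSemidef v z
    _ ≤ rpcMajorant v z X + rpcMajorant v z (Y - X) :=
        le_add_of_nonneg_right (rpcMajorant_nonneg hXY v z)
    _ = v ⬝ᵥ rpcPhi Y *ᵥ v := by
        rw [← map_add, add_sub_cancel, dotProduct_rpcPhi_mulVec_eq hY.1]

theorem rpcPhi_conjStarAlgAut (u : unitary (Matrix (Fin N) (Fin N) ℝ))
    (X : Matrix (Fin N) (Fin N) ℝ) :
    rpcPhi (Unitary.conjStarAlgAut ℝ _ u X) = Unitary.conjStarAlgAut ℝ _ u (rpcPhi X) := by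
  have htr : (Unitary.conjStarAlgAut ℝ _ u X).trace = X.trace := by
    rw [Unitary.conjStarAlgAut_apply, trace_mul_cycle, Unitary.coe_star_mul_self, one_mul]
  rw [rpcPhi, rpcPhi, htr, map_sub, map_smul, map_mul]

theorem rpcPhi_diagonal (d : Fin N → ℝ) : rpcPhi (diagonal d) = diagonal (rpcPhiVec d) := by
  rw [rpcPhi, trace_diagonal, diagonal_mul_diagonal, ← diagonal_smul, diagonal_sub]
  congr 1 with j
  simp [rpcPhiVec, sq]

theorem rpcPhi_iterate_conjStarAlgAut_diagonal (u : unitary (Matrix (Fin N) (Fin N) ℝ))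
    (n : ℕ) (d : Fin N → ℝ) :
    rpcPhi^[n] (Unitary.conjStarAlgAut ℝ _ u (diagonal d)) =
      Unitary.conjStarAlgAut ℝ _ u (diagonal (rpcPhiVec^[n] d)) := by
  have h : Function.Semiconj (fun d => Unitary.conjStarAlgAut ℝ _ u (diagonal d))
      rpcPhiVec rpcPhi := fun d => by
    simp only [rpcPhi_conjStarAlgAut, rpcPhi_diagonal]
  exact (h.iterate_right n d).symm

theorem rpcPhi_iterate_le_smul_one (hN : 0 < N) {A : Matrix (Fin N) (Fin N) ℝ}
    (hA : A.PosSemidef) {eig : Fin N → ℝ} {σ : Equiv.Perm (Fin N)}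
    (heig : eig = hA.1.eigenvalues ∘ σ) (hanti : Antitone eig) {r : ℕ} {a ε : ℝ}
    (ha : 0 < a) (hε : 0 < ε) {n : ℕ}
    (hn : (n : ℝ) ≥ r * Real.log (eig ⟨0, hN⟩ / a) + 1 / ε) :
    rpcPhi^[n] A ≤
      (a + ε * ∑ l ∈ univ.filter (fun l : Fin N => r ≤ (l : ℕ)), eig l) •
        (1 : Matrix (Fin N) (Fin N) ℝ) := by
  have hspec := hA.1.spectral_theorem
  simp only [RCLike.ofReal_real_eq_id, CompTriple.comp_eq] at hspec
  rw [hspec, rpcPhi_iterate_conjStarAlgAut_diagonal]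
  refine conjStarAlgAut_diagonal_le_smul_one _ fun j => ?_
  obtain ⟨k, rfl⟩ := σ.surjective j
  have heig0 : 0 ≤ eig := fun k => heig ▸ hA.eigenvalues_nonneg (σ k)
  calc rpcPhiVec^[n] hA.1.eigenvalues (σ k) = rpcPhiVec^[n] eig k := by
        rw [heig, rpcPhiVec_iterate_comp_equiv]; rfl
    _ ≤ _ := rpcPhiVec_iterate_le hN heig0 hanti ha hε hn k

end RpcPhi

section Expectation

variable {Ω : Type*} {m0 : MeasurableSpace Ω} {μ : Measure Ω}

noncomputable def entrywiseIntegral {m n : Type*} (μ : Measure Ω) (W : Ω → Matrix m n ℝ) :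
    Matrix m n ℝ :=
  Matrix.of fun i j => ∫ ω, W ω i j ∂μ

theorem isHermitian_entrywiseIntegral {n : Type*} {W : Ω → Matrix n n ℝ}
    (h : ∀ᵐ ω ∂μ, (W ω).IsHermitian) : (entrywiseIntegral μ W).IsHermitian :=
  IsHermitian.ext fun i j => integral_congr_ae (h.mono fun _ hω => by simpa using hω.apply i j)

variable {m n : Type*} [Fintype m] [Fintype n] {W : Ω → Matrix m n ℝ}

theorem linearMap_apply_eq_sum_single [DecidableEq m] [DecidableEq n]
    (L : Matrix m n ℝ →ₗ[ℝ] ℝ) (X : Matrix m n ℝ) :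
    L X = ∑ i, ∑ j, X i j * L (single i j 1) := by
  conv_lhs => rw [matrix_eq_sum_single X]
  simp only [map_sum]
  refine sum_congr rfl fun i _ => sum_congr rfl fun j _ => ?_
  rw [← smul_eq_mul, ← map_smul, smul_single, smul_eq_mul, mul_one]

theorem integrable_linearMap_apply (L : Matrix m n ℝ →ₗ[ℝ] ℝ)
    (hW : ∀ i j, Integrable (fun ω => W ω i j) μ) : Integrable (fun ω => L (W ω)) μ := by
  classical
  simp only [linearMap_apply_eq_sum_single L (W _)]
  exact integrable_finsetSum _ fun i _ => integrable_finsetSum _ fun j _ => (hW i j).mul_const _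

theorem integral_linearMap_apply (L : Matrix m n ℝ →ₗ[ℝ] ℝ)
    (hW : ∀ i j, Integrable (fun ω => W ω i j) μ) :
    ∫ ω, L (W ω) ∂μ = L (entrywiseIntegral μ W) := by
  classical
  simp only [linearMap_apply_eq_sum_single L (W _),
    linearMap_apply_eq_sum_single L (entrywiseIntegral μ W)]
  rw [integral_finsetSum _ fun i _ =>
    integrable_finsetSum _ fun j _ => (hW i j).mul_const _]
  refine sum_congr rfl fun i _ => ?_
  rw [integral_finsetSum _ fun j _ => (hW i j).mul_const _]
  exact sum_congr rfl fun j _ => integral_mul_const _ _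

theorem posSemidef_entrywiseIntegral {W : Ω → Matrix n n ℝ} (h : ∀ᵐ ω ∂μ, (W ω).PosSemidef)
    (hW : ∀ i j, Integrable (fun ω => W ω i j) μ) : (entrywiseIntegral μ W).PosSemidef := by
  refine PosSemidef.of_dotProduct_mulVec_nonneg
    (isHermitian_entrywiseIntegral (h.mono fun _ hω => hω.1)) fun v => ?_
  rw [star_trivial, ← dotProductMulVecₗ_apply, ← integral_linearMap_apply _ hW]
  exact integral_nonneg_of_ae (h.mono fun _ hω => by simpa using hω.dotProduct_mulVec_nonneg v)

theorem entrywiseIntegral_rpcPhi_le {N : ℕ} {W : Ω → Matrix (Fin N) (Fin N) ℝ}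
    (h : ∀ᵐ ω ∂μ, (W ω).PosSemidef) (hW : ∀ i j, Integrable (fun ω => W ω i j) μ)
    (hΦW : ∀ i j, Integrable (fun ω => rpcPhi (W ω) i j) μ) :
    entrywiseIntegral μ (fun ω => rpcPhi (W ω)) ≤ rpcPhi (entrywiseIntegral μ W) := by
  have hM := posSemidef_entrywiseIntegral h hW
  refine le_of_forall_dotProduct_mulVec_le
    (isHermitian_entrywiseIntegral (h.mono fun _ hω => hω.1.rpcPhi)) hM.1.rpcPhi fun v => ?_
  set z := (entrywiseIntegral μ W).trace⁻¹ • entrywiseIntegral μ W *ᵥ v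
  calc v ⬝ᵥ entrywiseIntegral μ (fun ω => rpcPhi (W ω)) *ᵥ v
      = ∫ ω, v ⬝ᵥ rpcPhi (W ω) *ᵥ v ∂μ :=
        (integral_linearMap_apply (dotProductMulVecₗ v v) hΦW).symm
    _ ≤ ∫ ω, rpcMajorant v z (W ω) ∂μ :=
        integral_mono_ae (integrable_linearMap_apply (dotProductMulVecₗ v v) hΦW)
          (integrable_linearMap_apply _ hW)
          (h.mono fun _ hω => dotProduct_rpcPhi_mulVec_le hω v z)
    _ = v ⬝ᵥ rpcPhi (entrywiseIntegral μ W) *ᵥ v := by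
        rw [integral_linearMap_apply _ hW, dotProduct_rpcPhi_mulVec_eq hM.1]

theorem entrywiseIntegral_le_rpcPhi_iterate [IsProbabilityMeasure μ] {N : ℕ}
    {ℱ : ℕ → MeasurableSpace Ω} (hℱ : ∀ i, ℱ i ≤ m0) {A : Matrix (Fin N) (Fin N) ℝ}
    {T : ℕ → Ω → Matrix (Fin N) (Fin N) ℝ} (hT0 : ∀ ω, T 0 ω = A)
    (hT : ∀ i, ∀ᵐ ω ∂μ, (T i ω).PosSemidef) (hint : ∀ i x y, Integrable (fun ω => T i ω x y) μ)
    (hcond : ∀ i x y,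
      μ[(fun ω => T (i + 1) ω x y) | ℱ i] =ᵐ[μ] fun ω => rpcPhi (T i ω) x y)
    (i : ℕ) : entrywiseIntegral μ (T i) ≤ rpcPhi^[i] A := by
  induction i with
  | zero =>
    have : entrywiseIntegral μ (T 0) = A := by ext x y; simp [entrywiseIntegral, hT0]
    exact this.le
  | succ i ih =>
    have hΦint (x y) : Integrable (fun ω => rpcPhi (T i ω) x y) μ :=
      integrable_condExp.congr (hcond i x y)
    have hnext :
        entrywiseIntegral μ (T (i + 1)) = entrywiseIntegral μ (fun ω => rpcPhi (T i ω)) := by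
      ext x y
      exact (integral_condExp (hℱ i)).symm.trans (integral_congr_ae (hcond i x y))
    rw [hnext, Function.iterate_succ_apply']
    exact (entrywiseIntegral_rpcPhi_le (hT i) (hint i) hΦint).trans
      (rpcPhi_mono_s18 (posSemidef_entrywiseIntegral (hT i) (hint i)).nonneg ih)

end Expectation

theorem rpcholesky_main_error_bound_general {N : ℕ} (hN : 0 < N)
    {Ω : Type*} {m0 : MeasurableSpace Ω} (μ : Measure Ω) [IsProbabilityMeasure μ]
    (m : ℕ → MeasurableSpace Ω) (hm : ∀ i, m i ≤ m0)
    (A : Matrix (Fin N) (Fin N) ℝ) (hA : A.PosSemidef)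
    (eig : Fin N → ℝ) (σ : Equiv.Perm (Fin N))
    (heig : eig = hA.1.eigenvalues ∘ σ) (hanti : Antitone eig)
    (T : ℕ → Ω → Matrix (Fin N) (Fin N) ℝ)
    (hT0 : ∀ ω, T 0 ω = A)
    (hTpsd : ∀ i, ∀ᵐ ω ∂μ, (T i ω).PosSemidef ∧ ((T i ω) - (T (i + 1) ω)).PosSemidef)
    (hint : ∀ i x y, Integrable (fun ω => T i ω x y) μ)
    (hcond : ∀ i x y,
      μ[(fun ω => T (i + 1) ω x y) | m i] =ᵐ[μ] fun ω => rpcPhi (T i ω) x y)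
    (r : ℕ) (a ε : ℝ) (ha : 0 < a) (hε : 0 < ε)
    (n : ℕ)
    (hn : (n : ℝ) ≥ r * Real.log (eig ⟨0, hN⟩ / a) + 1 / ε) :
    ((a + ε * ∑ j ∈ Finset.univ.filter (fun j : Fin N => r ≤ (j : ℕ)), eig j) •
        (1 : Matrix (Fin N) (Fin N) ℝ)
      - Matrix.of fun x y => ∫ ω, T n ω x y ∂μ).PosSemidef :=
  (entrywiseIntegral_le_rpcPhi_iterate hm hT0 (fun i => (hTpsd i).mono fun _ h => h.1) hint
    hcond n).trans (rpcPhi_iterate_le_smul_one hN hA heig hanti ha hε hn)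

/-- Main RPCholesky error bound (matrix form): if `T₀ = A` has sorted
eigenvalues `λ₁ ≥ λ₂ ≥ ⋯` and `E[T_{i+1} | ℱ_i] = Φ(T_i)`, then for any `r ≥ 0`
and `a, ε > 0`, `n ≥ r log(λ₁/a) + 1/ε` implies
`λ_max(E[T_n]) ≤ a + ε ∑_{j > r} λ_j`. -/
theorem rpcholesky_main_error_bound {N : ℕ} (hN : 0 < N)
    {Ω : Type*} {m0 : MeasurableSpace Ω} (μ : Measure Ω) [IsProbabilityMeasure μ]
    (m : ℕ → MeasurableSpace Ω) (hm : ∀ i, m i ≤ m0)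
    (A : Matrix (Fin N) (Fin N) ℝ) (hA : A.PosSemidef)
    (eig : Fin N → ℝ) (σ : Equiv.Perm (Fin N))
    (heig : eig = hA.1.eigenvalues ∘ σ) (hanti : Antitone eig)
    (T : ℕ → Ω → Matrix (Fin N) (Fin N) ℝ)
    (hT0 : ∀ ω, T 0 ω = A)
    (hTpsd : ∀ i, ∀ᵐ ω ∂μ, (T i ω).PosSemidef ∧ ((T i ω) - (T (i + 1) ω)).PosSemidef)
    (hTtr : ∀ i, ∀ᵐ ω ∂μ, 0 < (T i ω).trace)
    (hint : ∀ i x y, Integrable (fun ω => T i ω x y) μ)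
    (hcond : ∀ i x y,
      μ[(fun ω => T (i + 1) ω x y) | m i] =ᵐ[μ] fun ω => rpcPhi (T i ω) x y)
    (r : ℕ) (a ε : ℝ) (ha : 0 < a) (hε : 0 < ε)
    (n : ℕ)
    (hn : (n : ℝ) ≥ r * Real.log (eig ⟨0, hN⟩ / a) + 1 / ε) :
    ((a + ε * ∑ j ∈ Finset.univ.filter (fun j : Fin N => r ≤ (j : ℕ)), eig j) •
        (1 : Matrix (Fin N) (Fin N) ℝ)
      - Matrix.of fun x y => ∫ ω, T n ω x y ∂μ).PosSemidef :=
  rpcholesky_main_error_bound_general hN μ m hm A hA eig σ heig hanti T hT0 hTpsd hint hcond r a ε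
    ha hε n hn
end
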